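/- arXiv:2310.04839 — 3 statements merged into one kernel-verified Lean document; each statement's English description precedes it below -/
import Mathlib

section
/- Let W ⊂ GL(𝔱) be a finite group and ν ∈ 𝔱* a point with trivial W-stabilizer. Let I_{W,ν} ⊂ ℂ[𝔱*] be the ideal generated by W-invariant polynomials vanishing at ν, and let I_{W,+} be the ideal generated by W-invariant polynomials vanishing at 0. If ℂ[𝔱*] is a free module of rank |W| over the invariant ring ℂ[𝔱*]^W, then the associated graded ideal of I_{W,ν} (with respect to the degree filtration) equals I_{W,+}. -/
/-- The action of a matrix `M` on polynomials: `(M · p)(x) = p(Mx)`,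
i.e. substitution `Xᵢ ↦ ∑ⱼ Mᵢⱼ Xⱼ`. -/
noncomputable def polyAct (n : ℕ) (M : Matrix (Fin n) (Fin n) ℂ) :
    MvPolynomial (Fin n) ℂ →ₐ[ℂ] MvPolynomial (Fin n) ℂ :=
  MvPolynomial.aeval fun i => ∑ j, MvPolynomial.C (M i j) * MvPolynomial.X j

/-- The subalgebra of `W`-invariant polynomials. -/
noncomputable def invariantPolys (n : ℕ)
    (W : Subgroup (Matrix.GeneralLinearGroup (Fin n) ℂ)) :
    Subalgebra ℂ (MvPolynomial (Fin n) ℂ) :=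
  ⨅ w : W, AlgHom.equalizer
    (polyAct n ((w : Matrix.GeneralLinearGroup (Fin n) ℂ) : Matrix (Fin n) (Fin n) ℂ))
    (AlgHom.id ℂ (MvPolynomial (Fin n) ℂ))

open MvPolynomial Finset

section Aux

variable {σ : Type*}

theorem GrAux.homogComp_mul (p q : MvPolynomial σ ℂ) (d : ℕ) :
    homogeneousComponent d (p * q) =
      ∑ k ∈ range (d + 1), homogeneousComponent k p * homogeneousComponent (d - k) q := by
  classical
  set N := max (max p.totalDegree q.totalDegree) d + 1 with hN
  have hsum : ∀ r : MvPolynomial σ ℂ, r.totalDegree < N →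
      r = ∑ i ∈ range N, homogeneousComponent i r := by
    intro r h
    have h2 : ∑ i ∈ range N, homogeneousComponent i r
        = ∑ i ∈ range (r.totalDegree + 1), homogeneousComponent i r := by
      refine (Finset.sum_subset (Finset.range_subset_range.2 (by omega)) ?_).symm
      intro i _ hi
      exact homogeneousComponent_eq_zero _ r (by simp only [mem_range, not_lt] at hi ⊢; omega)
    rw [h2, sum_homogeneousComponent]
  conv_lhs => rw [hsum p (by omega), hsum q (by omega)]
  rw [Finset.sum_mul_sum, map_sum]
  have hterm : ∀ i ∈ range N, (homogeneousComponent d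
      (∑ j ∈ range N, homogeneousComponent i p * homogeneousComponent j q))
      = if i ≤ d then homogeneousComponent i p * homogeneousComponent (d - i) q else 0 := by
    intro i _
    rw [map_sum]
    have hone : ∀ j, homogeneousComponent d (homogeneousComponent i p * homogeneousComponent j q)
        = if i + j = d then homogeneousComponent i p * homogeneousComponent j q else 0 := by
      intro j
      have hmem : homogeneousComponent i p * homogeneousComponent j q
          ∈ homogeneousSubmodule σ ℂ (i + j) := by
        rw [mem_homogeneousSubmodule]
        exact (homogeneousComponent_isHomogeneous i p).mul (homogeneousComponent_isHomogeneous j q)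
      rw [homogeneousComponent_of_mem hmem]
      simp [eq_comm]
    simp_rw [hone]
    rcases le_or_gt i d with h | h
    · rw [Finset.sum_eq_single (d - i)]
      · rw [if_pos (by omega), if_pos h]
      · intro j _ hj; rw [if_neg (by omega)]
      · intro habs; exact absurd (Finset.mem_range.2 (by omega)) habs
    · rw [if_neg (by omega)]
      exact Finset.sum_eq_zero fun j _ => if_neg (by omega)
  rw [Finset.sum_congr rfl hterm]
  rw [← Finset.sum_subset (Finset.range_subset_range.2 (show d + 1 ≤ N by omega))
      (fun i _ hi => if_neg (by simp only [mem_range, not_lt] at hi; omega))]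
  exact Finset.sum_congr rfl fun i hi => if_pos (by simp only [mem_range] at hi; omega)

theorem GrAux.comp_comp (f : MvPolynomial σ ℂ) (m k : ℕ) :
    homogeneousComponent m (homogeneousComponent k f)
      = if m = k then homogeneousComponent k f else 0 :=
  homogeneousComponent_of_mem
    ((mem_homogeneousSubmodule _ _).2 (homogeneousComponent_isHomogeneous k f))

open GrAux in
theorem GrAux.grLead_exists (I : Ideal (MvPolynomial σ ℂ)) {h : MvPolynomial σ ℂ}
    (hh : h ∈ Ideal.span {g | ∃ f ∈ I, g = homogeneousComponent f.totalDegree f}) :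
    ∀ d : ℕ, ∃ u ∈ I, u.totalDegree ≤ d ∧ homogeneousComponent d u = homogeneousComponent d h := by
  classical
  induction hh using Submodule.span_induction with
  | mem x hx =>
    obtain ⟨f, hf, rfl⟩ := hx
    intro d
    rcases eq_or_ne d f.totalDegree with h | h
    · subst h
      exact ⟨f, hf, le_rfl, by rw [comp_comp, if_pos rfl]⟩
    · exact ⟨0, Ideal.zero_mem I, by simp, by rw [comp_comp, if_neg h]; simp⟩
  | zero => intro d; exact ⟨0, Ideal.zero_mem I, by simp, by simp⟩
  | add x y hx hy ihx ihy =>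
    intro d
    obtain ⟨u, hu, hud, huc⟩ := ihx d
    obtain ⟨v, hv, hvd, hvc⟩ := ihy d
    exact ⟨u + v, Ideal.add_mem I hu hv,
      le_trans (totalDegree_add u v) (max_le hud hvd), by rw [map_add, map_add, huc, hvc]⟩
  | smul r x hx ih =>
    intro d
    choose u hu hud huc using ih
    refine ⟨∑ k ∈ range (d + 1), homogeneousComponent k r * u (d - k),
      Submodule.sum_mem _ fun k _ => Ideal.mul_mem_left I _ (hu _), ?_, ?_⟩
    · refine le_trans (totalDegree_finset_sum _ _) (Finset.sup_le fun k hk => ?_)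
      refine le_trans (totalDegree_mul _ _) ?_
      have h1 : (homogeneousComponent k r).totalDegree ≤ k :=
        (homogeneousComponent_isHomogeneous k r).totalDegree_le
      have h2 := hud (d - k)
      simp only [mem_range] at hk
      omega
    · rw [map_sum, smul_eq_mul, homogComp_mul]
      refine Finset.sum_congr rfl fun k hk => ?_
      rw [homogComp_mul]
      rw [Finset.sum_eq_single k]
      · rw [comp_comp, if_pos rfl, huc]
      · intro m _ hm
        rw [comp_comp, if_neg hm, zero_mul]
      · intro habs
        exact absurd hk habs

open GrAux in
theorem GrAux.span_transfer (I : Ideal (MvPolynomial σ ℂ)) {ι : Type*}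
    (c : ι → MvPolynomial σ ℂ) (hhom : ∀ i, ∃ d, (c i).IsHomogeneous d)
    (hspan : ∀ g : MvPolynomial σ ℂ, g ∈ Submodule.span ℂ (Set.range c) ⊔
      (Ideal.span {g : MvPolynomial σ ℂ |
        ∃ f ∈ I, g = homogeneousComponent f.totalDegree f}).restrictScalars ℂ) :
    ∀ f : MvPolynomial σ ℂ, f ∈ Submodule.span ℂ (Set.range c) ⊔ I.restrictScalars ℂ := by
  classical
  have key : ∀ (d : ℕ) (f : MvPolynomial σ ℂ),
      (∀ e, d ≤ e → homogeneousComponent e f = 0) →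
      f ∈ Submodule.span ℂ (Set.range c) ⊔ I.restrictScalars ℂ := by
    intro d
    induction d with
    | zero =>
      intro f hf
      have : f = 0 := by
        rw [← sum_homogeneousComponent f]
        exact Finset.sum_eq_zero fun i _ => hf i (Nat.zero_le i)
      rw [this]; exact Submodule.zero_mem _
    | succ d ih =>
      intro f hf
      obtain ⟨y, hy, z, hz, hyz⟩ := Submodule.mem_sup.1 (hspan (homogeneousComponent d f))
      obtain ⟨u, huI, hud, huc⟩ := grLead_exists I hz d
      have hcy : homogeneousComponent d y ∈ Submodule.span ℂ (Set.range c) := by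
        have : homogeneousComponent d y ∈
            Submodule.map (homogeneousComponent d (σ := σ) (R := ℂ))
              (Submodule.span ℂ (Set.range c)) := ⟨y, hy, rfl⟩
        rw [Submodule.map_span] at this
        refine Submodule.span_le.2 ?_ this
        rintro x ⟨w, ⟨i, rfl⟩, rfl⟩
        obtain ⟨di, hdi⟩ := hhom i
        rw [homogeneousComponent_of_mem ((mem_homogeneousSubmodule _ _).2 hdi)]
        split
        · exact Submodule.subset_span ⟨i, rfl⟩
        · exact Submodule.zero_mem _
      set f' := f - homogeneousComponent d y - u with hf'
      have hf'comp : ∀ e, d ≤ e → homogeneousComponent e f' = 0 := by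
        intro e he
        rcases eq_or_lt_of_le he with heq | hlt
        · subst heq
          rw [hf', map_sub, map_sub, comp_comp, if_pos rfl]
          have h1 : homogeneousComponent d (homogeneousComponent d f)
              = homogeneousComponent d y + homogeneousComponent d z := by
            rw [comp_comp, if_pos rfl, ← map_add, hyz]
            exact ((comp_comp f d d).trans (if_pos rfl)).symm
          rw [huc]
          have h2 := comp_comp f d d
          rw [if_pos rfl] at h2
          rw [← h2, h1]
          ring
        · rw [hf', map_sub, map_sub, hf e (by omega), comp_comp, if_neg (by omega),
            homogeneousComponent_eq_zero _ _ (by omega)]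
          ring
      have hmem := ih f' hf'comp
      have : f = f' + homogeneousComponent d y + u := by rw [hf']; ring
      rw [this]
      refine Submodule.add_mem _ (Submodule.add_mem _ hmem ?_) ?_
      · exact Submodule.mem_sup_left hcy
      · exact Submodule.mem_sup_right huI
  intro f
  exact key (f.totalDegree + 1) f fun e he => homogeneousComponent_eq_zero _ _ (by omega)

theorem GrAux.exists_indicator {n : ℕ} {ι : Type*} [Fintype ι] [DecidableEq ι]
    (pts : ι → Fin n → ℂ) (hinj : Function.Injective pts) (i₀ : ι) :
    ∃ f : MvPolynomial (Fin n) ℂ,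
      eval (pts i₀) f = 1 ∧ ∀ i : ι, i ≠ i₀ → eval (pts i) f = 0 := by
  classical
  have key : ∀ i : ι, i ≠ i₀ → ∃ j, pts i j ≠ pts i₀ j := by
    intro i hi
    by_contra hcon
    push_neg at hcon
    exact hi (hinj (funext hcon))
  choose j hj using key
  set factor : ι → MvPolynomial (Fin n) ℂ := fun i =>
    if h : i = i₀ then 1 else
      C (pts i₀ (j i h) - pts i (j i h))⁻¹ * (X (j i h) - C (pts i (j i h)))
  refine ⟨∏ i ∈ Finset.univ.erase i₀, factor i, ?_, ?_⟩
  · rw [map_prod]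
    refine Finset.prod_eq_one fun i hi => ?_
    have hi' : i ≠ i₀ := (Finset.mem_erase.1 hi).1
    simp only [factor, dif_neg hi']
    rw [map_mul, map_sub, eval_C, eval_C, eval_X]
    rw [inv_mul_eq_one₀ (sub_ne_zero.2 fun h => hj i hi' h.symm)]
  · intro i hi
    rw [map_prod]
    refine Finset.prod_eq_zero (Finset.mem_erase.2 ⟨hi, Finset.mem_univ i⟩) ?_
    simp only [factor, dif_neg hi]
    rw [map_mul, map_sub, eval_C, eval_C, eval_X, sub_self, mul_zero]

theorem GrAux.eval_surjective {n : ℕ} {ι : Type*} [Fintype ι] [DecidableEq ι]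
    (pts : ι → Fin n → ℂ) (hinj : Function.Injective pts) :
    Function.Surjective (fun (f : MvPolynomial (Fin n) ℂ) (i : ι) => eval (pts i) f) := by
  intro g
  choose ind hind1 hind0 using fun i₀ => GrAux.exists_indicator pts hinj i₀
  refine ⟨∑ i, C (g i) * ind i, ?_⟩
  funext i₁
  simp only [map_sum, map_mul, eval_C]
  rw [Finset.sum_eq_single i₁]
  · rw [hind1, mul_one]
  · intro i _ hne
    rw [hind0 i i₁ hne.symm]
    ring
  · intro h; exact absurd (Finset.mem_univ i₁) h

theorem GrAux.quot_top_span {V : Type*} [AddCommGroup V] [Module ℂ V] (M : Submodule ℂ V)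
    {ι : Type*} (v : ι → V)
    (h : ∀ f, f ∈ Submodule.span ℂ (Set.range v) ⊔ M) :
    Submodule.span ℂ (Set.range fun i => M.mkQ (v i)) = ⊤ := by
  rw [eq_top_iff]
  rintro x -
  obtain ⟨f, rfl⟩ := M.mkQ_surjective x
  obtain ⟨y, hy, z, hz, hyz⟩ := Submodule.mem_sup.1 (h f)
  rw [← hyz, map_add]
  have hz0 : M.mkQ z = 0 := (Submodule.Quotient.mk_eq_zero M).2 hz
  rw [hz0, add_zero]
  have hmy : M.mkQ y ∈ Submodule.map M.mkQ (Submodule.span ℂ (Set.range v)) := ⟨y, hy, rfl⟩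
  rw [Submodule.map_span] at hmy
  have : M.mkQ '' Set.range v = Set.range fun i => M.mkQ (v i) := by
    rw [← Set.range_comp]; rfl
  rwa [this] at hmy

theorem GrAux.findim_le_of_span {V : Type*} [AddCommGroup V] [Module ℂ V]
    {ι : Type*} [Fintype ι] (v : ι → V)
    (h : Submodule.span ℂ (Set.range v) = ⊤) :
    FiniteDimensional ℂ V ∧ Module.finrank ℂ V ≤ Fintype.card ι := by
  constructor
  · exact ⟨h ▸ Submodule.fg_span (Set.finite_range v)⟩
  · have h1 := finrank_range_le_card (R := ℂ) v
    unfold Set.finrank at h1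
    rwa [h, finrank_top] at h1

end Aux

theorem mem_invariantPolys {n : ℕ} {W : Subgroup (Matrix.GeneralLinearGroup (Fin n) ℂ)}
    {f : MvPolynomial (Fin n) ℂ} :
    f ∈ invariantPolys n W ↔ ∀ w : W,
      polyAct n ((w : Matrix.GeneralLinearGroup (Fin n) ℂ) : Matrix (Fin n) (Fin n) ℂ) f = f := by
  simp [invariantPolys, Algebra.mem_iInf, AlgHom.mem_equalizer]

theorem eval_polyAct {n : ℕ} (M : Matrix (Fin n) (Fin n) ℂ) (x : Fin n → ℂ)
    (f : MvPolynomial (Fin n) ℂ) :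
    eval x (polyAct n M f) = eval (M.mulVec x) f := by
  have h : (MvPolynomial.aeval x).comp (polyAct n M)
      = MvPolynomial.aeval (fun i => M.mulVec x i) := by
    rw [polyAct, MvPolynomial.comp_aeval]
    congr 1
    funext i
    simp [Matrix.mulVec, dotProduct]
  have key : ∀ (y : Fin n → ℂ) (p : MvPolynomial (Fin n) ℂ),
      MvPolynomial.aeval y p = eval y p := fun y p => by
    rw [MvPolynomial.aeval_def, Algebra.algebraMap_self]; rfl
  have h2 := congrArg (fun g => g f) (congrArg (DFunLike.coe) h)
  simp only [AlgHom.comp_apply] at h2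
  rw [← key x, h2]
  exact key _ f

theorem polyAct_isHomogeneous {n : ℕ} (M : Matrix (Fin n) (Fin n) ℂ)
    {f : MvPolynomial (Fin n) ℂ} {d : ℕ} (hf : f.IsHomogeneous d) :
    (polyAct n M f).IsHomogeneous d := by
  have := hf.aeval (g := fun i => ∑ j, MvPolynomial.C (M i j) * MvPolynomial.X j) (n := 1)
    (fun i => IsHomogeneous.sum _ _ _ fun j _ => by
      simpa using (isHomogeneous_C (Fin n) (M i j)).mul (isHomogeneous_X ℂ j))
  simpa [polyAct] using this

theorem polyAct_homogeneousComponent {n : ℕ} (M : Matrix (Fin n) (Fin n) ℂ)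
    (f : MvPolynomial (Fin n) ℂ) (d : ℕ) :
    homogeneousComponent d (polyAct n M f) = polyAct n M (homogeneousComponent d f) := by
  classical
  conv_lhs => rw [← sum_homogeneousComponent f]
  rw [map_sum, map_sum]
  have hterm : ∀ i ∈ range (f.totalDegree + 1),
      homogeneousComponent d (polyAct n M (homogeneousComponent i f))
        = if d = i then polyAct n M (homogeneousComponent i f) else 0 := by
    intro i _
    exact homogeneousComponent_of_mem ((mem_homogeneousSubmodule _ _).2
      (polyAct_isHomogeneous M (homogeneousComponent_isHomogeneous i f)))
  rw [Finset.sum_congr rfl hterm, Finset.sum_ite_eq]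
  rcases le_or_gt d f.totalDegree with h | h
  · rw [if_pos (Finset.mem_range.2 (by omega))]
  · rw [if_neg (by simp; omega), homogeneousComponent_eq_zero d f h, map_zero]

theorem homogeneousComponent_mem_invariant {n : ℕ}
    {W : Subgroup (Matrix.GeneralLinearGroup (Fin n) ℂ)} {f : MvPolynomial (Fin n) ℂ}
    (hf : f ∈ invariantPolys n W) (d : ℕ) :
    homogeneousComponent d f ∈ invariantPolys n W := by
  rw [mem_invariantPolys] at hf ⊢
  intro w
  rw [← polyAct_homogeneousComponent, hf w]

theorem span_zero_le_gr (n : ℕ) (W : Subgroup (Matrix.GeneralLinearGroup (Fin n) ℂ))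
    (ν : Fin n → ℂ) :
    Ideal.span {f : MvPolynomial (Fin n) ℂ |
        f ∈ invariantPolys n W ∧ MvPolynomial.eval (0 : Fin n → ℂ) f = 0} ≤
    Ideal.span {g : MvPolynomial (Fin n) ℂ |
        ∃ f ∈ Ideal.span {f : MvPolynomial (Fin n) ℂ |
            f ∈ invariantPolys n W ∧ MvPolynomial.eval ν f = 0},
          g = MvPolynomial.homogeneousComponent f.totalDegree f} := by
  rw [Ideal.span_le]
  rintro f ⟨hfA, hf0⟩
  show f ∈ Ideal.span _
  rw [← sum_homogeneousComponent f]
  refine Submodule.sum_mem _ fun i _ => ?_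
  rcases eq_or_ne (homogeneousComponent i f) 0 with hz | hz
  · rw [hz]; exact Submodule.zero_mem _
  rcases Nat.eq_zero_or_pos i with rfl | hi
  · exfalso
    apply hz
    rw [homogeneousComponent_zero]
    have : coeff 0 f = 0 := by
      rw [← constantCoeff_eq, ← eval_zero]; exact hf0
    rw [this, map_zero]
  · set g := homogeneousComponent i f with hg
    have hgA : g ∈ invariantPolys n W := homogeneousComponent_mem_invariant hfA i
    have hgh : g.IsHomogeneous i := homogeneousComponent_isHomogeneous i f
    set u := g - MvPolynomial.C (eval ν g) with hu
    have huI : u ∈ Ideal.span {f : MvPolynomial (Fin n) ℂ |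
        f ∈ invariantPolys n W ∧ MvPolynomial.eval ν f = 0} := by
      refine Ideal.subset_span ⟨?_, ?_⟩
      · exact Subalgebra.sub_mem _ hgA (Subalgebra.algebraMap_mem _ _)
      · simp [hu]
    have hcompi : homogeneousComponent i u = g := by
      rw [hu, map_sub, homogeneousComponent_of_mem ((mem_homogeneousSubmodule _ _).2 hgh),
        if_pos rfl,
        homogeneousComponent_of_mem ((mem_homogeneousSubmodule _ _).2 (isHomogeneous_C _ _)),
        if_neg (by omega), sub_zero]
    have hdeg : u.totalDegree = i := by
      have hle : u.totalDegree ≤ i := by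
        refine le_trans (totalDegree_sub_C_le _ _) ?_
        exact hgh.totalDegree_le
      have hge : ¬ u.totalDegree < i := fun hlt => by
        rw [homogeneousComponent_eq_zero _ _ hlt] at hcompi
        exact hz hcompi.symm
      omega
    refine Ideal.subset_span ⟨u, huI, ?_⟩
    rw [hdeg, hcompi]

theorem basis_sup_span {n : ℕ} {W : Subgroup (Matrix.GeneralLinearGroup (Fin n) ℂ)}
    {ι : Type*} [Fintype ι] (b : Module.Basis ι (invariantPolys n W) (MvPolynomial (Fin n) ℂ))
    (p : Fin n → ℂ) (f : MvPolynomial (Fin n) ℂ) :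
    f ∈ Submodule.span ℂ (Set.range fun i => (b i : MvPolynomial (Fin n) ℂ)) ⊔
      (Ideal.span {f : MvPolynomial (Fin n) ℂ |
        f ∈ invariantPolys n W ∧ MvPolynomial.eval p f = 0}).restrictScalars ℂ := by
  classical
  have hrepr := b.sum_repr f
  rw [← hrepr]
  refine Submodule.sum_mem _ fun i _ => ?_
  have hsmul : (b.repr f i) • (b i : MvPolynomial (Fin n) ℂ)
      = ((b.repr f i : MvPolynomial (Fin n) ℂ)) * b i := rfl
  rw [hsmul]
  have hdecomp : ((b.repr f i : MvPolynomial (Fin n) ℂ)) * b i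
      = MvPolynomial.C (eval p (b.repr f i : MvPolynomial (Fin n) ℂ)) * b i
        + ((b.repr f i : MvPolynomial (Fin n) ℂ)
            - MvPolynomial.C (eval p (b.repr f i : MvPolynomial (Fin n) ℂ))) * b i := by
    ring
  rw [hdecomp]
  refine Submodule.add_mem _ ?_ ?_
  · refine Submodule.mem_sup_left ?_
    rw [← smul_eq_C_mul]
    exact Submodule.smul_mem _ _ (Submodule.subset_span ⟨i, rfl⟩)
  · refine Submodule.mem_sup_right ?_
    show _ ∈ Ideal.span _
    refine Ideal.mul_mem_right _ _ (Ideal.subset_span ⟨?_, ?_⟩)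
    · exact Subalgebra.sub_mem _ (b.repr f i).2 (Subalgebra.algebraMap_mem _ _)
    · simp

/-- Let `W ⊂ GL(𝔱)` be finite, `ν` a point with trivial stabilizer, and suppose
`ℂ[𝔱*]` is free of rank `|W|` over the invariants.  Then the associated graded ideal of
`I_{W,ν}` (the ideal generated by invariants vanishing at `ν`) equals `I_{W,+}` (the
ideal generated by invariants vanishing at `0`). -/
theorem gr_ideal_eq (n : ℕ) (W : Subgroup (Matrix.GeneralLinearGroup (Fin n) ℂ))
    [Finite W] (ν : Fin n → ℂ)
    (hν : ∀ w : W,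
      ((w : Matrix.GeneralLinearGroup (Fin n) ℂ) : Matrix (Fin n) (Fin n) ℂ).mulVec ν = ν →
      w = 1)
    (hfree : Nonempty
      (Module.Basis (Fin (Nat.card W)) (invariantPolys n W) (MvPolynomial (Fin n) ℂ))) :
    Ideal.span {g : MvPolynomial (Fin n) ℂ |
        ∃ f ∈ Ideal.span {f : MvPolynomial (Fin n) ℂ |
            f ∈ invariantPolys n W ∧ MvPolynomial.eval ν f = 0},
          g = MvPolynomial.homogeneousComponent f.totalDegree f} =
      Ideal.span {f : MvPolynomial (Fin n) ℂ |
        f ∈ invariantPolys n W ∧ MvPolynomial.eval (0 : Fin n → ℂ) f = 0} := by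
  classical
  obtain ⟨b⟩ := hfree
  letI : Fintype W := Fintype.ofFinite W
  set Iν := Ideal.span {f : MvPolynomial (Fin n) ℂ |
      f ∈ invariantPolys n W ∧ MvPolynomial.eval ν f = 0} with hIν
  set I0 := Ideal.span {f : MvPolynomial (Fin n) ℂ |
      f ∈ invariantPolys n W ∧ MvPolynomial.eval (0 : Fin n → ℂ) f = 0} with hI0
  set G := Ideal.span {g : MvPolynomial (Fin n) ℂ |
      ∃ f ∈ Iν, g = MvPolynomial.homogeneousComponent f.totalDegree f} with hG
  have hI0G : I0 ≤ G := span_zero_le_gr n W ν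
  set Mν := Iν.restrictScalars ℂ with hMν
  set M0 := I0.restrictScalars ℂ with hM0
  set MG := G.restrictScalars ℂ with hMG
  have hM0G : M0 ≤ MG := fun x hx => hI0G hx
  set v : Fin (Nat.card W) → MvPolynomial (Fin n) ℂ := fun i => (b i : MvPolynomial (Fin n) ℂ) with hv
  have hsupν : ∀ f : MvPolynomial (Fin n) ℂ, f ∈ Submodule.span ℂ (Set.range v) ⊔ Mν :=
    fun f => by rw [hv, hMν, hIν]; exact basis_sup_span b ν f
  have hsup0 : ∀ f : MvPolynomial (Fin n) ℂ, f ∈ Submodule.span ℂ (Set.range v) ⊔ M0 :=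
    fun f => by rw [hM0, hI0]; exact basis_sup_span b 0 f
  have hsupG : ∀ f : MvPolynomial (Fin n) ℂ, f ∈ Submodule.span ℂ (Set.range v) ⊔ MG :=
    fun f => sup_le_sup_left hM0G _ (hsup0 f)
  obtain ⟨hfdν, hrν⟩ := GrAux.findim_le_of_span _ (GrAux.quot_top_span Mν v hsupν)
  obtain ⟨hfdG, hrG⟩ := GrAux.findim_le_of_span _ (GrAux.quot_top_span MG v hsupG)
  obtain ⟨hfd0, hr0⟩ := GrAux.findim_le_of_span _ (GrAux.quot_top_span M0 v hsup0)
  rw [Fintype.card_fin] at hrν hrG hr0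
  -- lower bound via evaluation at the orbit of ν
  set pts : W → (Fin n → ℂ) := fun w =>
    Matrix.mulVec ((w : Matrix.GeneralLinearGroup (Fin n) ℂ) : Matrix (Fin n) (Fin n) ℂ) ν
    with hpts
  have hptsinj : Function.Injective pts := by
    intro w w' h
    have hmul : Matrix.mulVec (((w'⁻¹ * w : W) : Matrix.GeneralLinearGroup (Fin n) ℂ) :
        Matrix (Fin n) (Fin n) ℂ) ν = ν := by
      have hco : (((w'⁻¹ * w : W) : Matrix.GeneralLinearGroup (Fin n) ℂ) :
          Matrix (Fin n) (Fin n) ℂ)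
          = (((w'⁻¹ : W) : Matrix.GeneralLinearGroup (Fin n) ℂ) : Matrix (Fin n) (Fin n) ℂ)
            * (((w : W) : Matrix.GeneralLinearGroup (Fin n) ℂ) : Matrix (Fin n) (Fin n) ℂ) := by
        push_cast
        rfl
      rw [hco, ← Matrix.mulVec_mulVec]
      show Matrix.mulVec _ (pts w) = ν
      rw [h]
      show Matrix.mulVec _ (Matrix.mulVec _ ν) = ν
      rw [Matrix.mulVec_mulVec]
      have hco1 : (((w'⁻¹ : W) : Matrix.GeneralLinearGroup (Fin n) ℂ) :
          Matrix (Fin n) (Fin n) ℂ)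
          * (((w' : W) : Matrix.GeneralLinearGroup (Fin n) ℂ) : Matrix (Fin n) (Fin n) ℂ)
          = (((w'⁻¹ * w' : W) : Matrix.GeneralLinearGroup (Fin n) ℂ) :
            Matrix (Fin n) (Fin n) ℂ) := by
        push_cast
        rfl
      rw [hco1, inv_mul_cancel]
      show Matrix.mulVec (((1 : W) : Matrix.GeneralLinearGroup (Fin n) ℂ) :
        Matrix (Fin n) (Fin n) ℂ) ν = ν
      have : (((1 : W) : Matrix.GeneralLinearGroup (Fin n) ℂ) :
          Matrix (Fin n) (Fin n) ℂ) = 1 := by push_cast; rfl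
      rw [this, Matrix.one_mulVec]
    have := hν _ hmul
    have h1 : w'⁻¹ * w = 1 := this
    have : w = w' := by
      rw [← one_mul w, ← mul_inv_cancel w', mul_assoc]
      rw [show w'⁻¹ * w = 1 from h1, mul_one]
    exact this
  set L : MvPolynomial (Fin n) ℂ →ₗ[ℂ] (W → ℂ) :=
    { toFun := fun f w => eval (pts w) f
      map_add' := by intros; funext w; simp
      map_smul' := by
        intro m x; funext w
        show eval (pts w) (m • x) = m * eval (pts w) x
        rw [smul_eq_C_mul, map_mul, eval_C] } with hL
  have hkerL : Mν ≤ LinearMap.ker L := by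
    intro x hx
    rw [LinearMap.mem_ker]
    funext w
    show eval (pts w) x = 0
    have hle : Iν ≤ RingHom.ker (eval (pts w) : MvPolynomial (Fin n) ℂ →+* ℂ) := by
      rw [hIν, Ideal.span_le]
      rintro g ⟨hgA, hgν⟩
      show eval (pts w) g = 0
      have h1 := eval_polyAct
        (((w : Matrix.GeneralLinearGroup (Fin n) ℂ)) : Matrix (Fin n) (Fin n) ℂ) ν g
      rw [mem_invariantPolys] at hgA
      rw [hpts]
      show eval _ g = 0
      rw [← h1, hgA w, hgν]
    exact hle hx
  set L' : (MvPolynomial (Fin n) ℂ ⧸ Mν) →ₗ[ℂ] (W → ℂ) := Mν.liftQ L hkerL with hL'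
  have hL'surj : Function.Surjective L' := by
    intro g
    obtain ⟨f, hf⟩ := GrAux.eval_surjective pts hptsinj g
    exact ⟨Mν.mkQ f, by rw [hL', Submodule.mkQ_apply, Submodule.liftQ_apply]; exact hf⟩
  have hlow : Nat.card W ≤ Module.finrank ℂ (MvPolynomial (Fin n) ℂ ⧸ Mν) := by
    have h1 : Module.finrank ℂ (W → ℂ) = Nat.card W := by
      rw [Module.finrank_pi, Nat.card_eq_fintype_card]
    calc Nat.card W = Module.finrank ℂ (W → ℂ) := h1.symm
      _ = Module.finrank ℂ ↥(LinearMap.range L') := by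
          rw [LinearMap.range_eq_top.2 hL'surj, finrank_top]
      _ ≤ Module.finrank ℂ (MvPolynomial (Fin n) ℂ ⧸ Mν) := LinearMap.finrank_range_le L'
  -- monomial spanning set of the graded quotient
  have hmonotop : Submodule.span ℂ
      (Set.range fun m : (Fin n →₀ ℕ) => MG.mkQ (monomial m (1 : ℂ))) = ⊤ := by
    have htop : Submodule.span ℂ
        (Set.range fun m : (Fin n →₀ ℕ) => (monomial m (1 : ℂ) : MvPolynomial (Fin n) ℂ)) = ⊤ := by
      rw [eq_top_iff]
      rintro f -
      rw [← support_sum_monomial_coeff f]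
      refine Submodule.sum_mem _ fun m hm => ?_
      have : (monomial m (coeff m f) : MvPolynomial (Fin n) ℂ) = (coeff m f) • monomial m (1 : ℂ) := by
        rw [smul_monomial, smul_eq_mul, mul_one]
      rw [this]
      exact Submodule.smul_mem _ _ (Submodule.subset_span ⟨m, rfl⟩)
    exact GrAux.quot_top_span MG _ (fun f => Submodule.mem_sup_left (htop ▸ Submodule.mem_top))
  obtain ⟨t, hts, htspan, htli⟩ := exists_linearIndependent ℂ
    (Set.range fun m : (Fin n →₀ ℕ) => MG.mkQ (monomial m (1 : ℂ)))
  rw [hmonotop] at htspan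
  haveI : FiniteDimensional ℂ (MvPolynomial (Fin n) ℂ ⧸ MG) := hfdG
  have htfin : t.Finite := htli.set_finite_of_isNoetherian
  letI := htfin.fintype
  let tb : Module.Basis t ℂ (MvPolynomial (Fin n) ℂ ⧸ MG) := Module.Basis.mk htli (by rw [Subtype.range_coe, htspan])
  have hcard : Module.finrank ℂ (MvPolynomial (Fin n) ℂ ⧸ MG) = Fintype.card t :=
    Module.finrank_eq_card_basis tb
  have hrep : ∀ x : t, ∃ m : Fin n →₀ ℕ, MG.mkQ (monomial m (1 : ℂ)) = (x : MvPolynomial (Fin n) ℂ ⧸ MG) :=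
    fun x => hts x.2
  choose mrep hmrep using hrep
  set c : t → MvPolynomial (Fin n) ℂ := fun x => monomial (mrep x) (1 : ℂ) with hc
  have hchom : ∀ x : t, ∃ d, (c x).IsHomogeneous d :=
    fun x => ⟨(mrep x).degree, isHomogeneous_monomial _ rfl⟩
  have hcspan : ∀ g : MvPolynomial (Fin n) ℂ, g ∈ Submodule.span ℂ (Set.range c) ⊔ MG := by
    intro g
    have hrange : (Set.range fun x : t => MG.mkQ (c x)) = t := by
      have : (fun x : t => MG.mkQ (c x)) = fun x : t => (x : MvPolynomial (Fin n) ℂ ⧸ MG) := funext hmrep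
      rw [this, Subtype.range_coe]
    have hgmem : MG.mkQ g ∈ Submodule.span ℂ (Set.range fun x : t => MG.mkQ (c x)) := by
      rw [hrange, htspan]; trivial
    have hcomp : (Set.range fun x : t => MG.mkQ (c x)) = MG.mkQ '' Set.range c := by
      rw [← Set.range_comp]; rfl
    rw [hcomp, ← Submodule.map_span] at hgmem
    obtain ⟨y, hy, hyq⟩ := hgmem
    have hsub : g - y ∈ MG := (Submodule.Quotient.eq MG).1 (by
      rw [← Submodule.mkQ_apply, ← Submodule.mkQ_apply, hyq])
    exact Submodule.mem_sup.2 ⟨y, hy, g - y, hsub, by ring⟩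
  have htrans : ∀ f : MvPolynomial (Fin n) ℂ, f ∈ Submodule.span ℂ (Set.range c) ⊔ Mν := by
    refine GrAux.span_transfer Iν c hchom ?_
    intro g
    exact hG ▸ hcspan g
  obtain ⟨-, hrν2⟩ := GrAux.findim_le_of_span _ (GrAux.quot_top_span Mν c htrans)
  have hνG : Module.finrank ℂ (MvPolynomial (Fin n) ℂ ⧸ Mν) ≤ Module.finrank ℂ (MvPolynomial (Fin n) ℂ ⧸ MG) := by
    rw [hcard]; exact hrν2
  have hGeq : Module.finrank ℂ (MvPolynomial (Fin n) ℂ ⧸ MG) = Nat.card W := le_antisymm hrG (by omega)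
  -- surjection from quotient by I0 onto quotient by G
  set π : (MvPolynomial (Fin n) ℂ ⧸ M0) →ₗ[ℂ] (MvPolynomial (Fin n) ℂ ⧸ MG) :=
    Submodule.mapQ M0 MG LinearMap.id (fun x hx => hM0G hx) with hπ
  have hπsurj : Function.Surjective π := by
    intro x
    obtain ⟨f, rfl⟩ := MG.mkQ_surjective x
    exact ⟨M0.mkQ f, by rw [hπ, Submodule.mkQ_apply, Submodule.mapQ_apply]; rfl⟩
  have hG0 : Module.finrank ℂ (MvPolynomial (Fin n) ℂ ⧸ MG) ≤ Module.finrank ℂ (MvPolynomial (Fin n) ℂ ⧸ M0) := by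
    calc Module.finrank ℂ (MvPolynomial (Fin n) ℂ ⧸ MG) = Module.finrank ℂ ↥(LinearMap.range π) := by
          rw [LinearMap.range_eq_top.2 hπsurj, finrank_top]
      _ ≤ Module.finrank ℂ (MvPolynomial (Fin n) ℂ ⧸ M0) := LinearMap.finrank_range_le π
  have h0eq : Module.finrank ℂ (MvPolynomial (Fin n) ℂ ⧸ M0) = Module.finrank ℂ (MvPolynomial (Fin n) ℂ ⧸ MG) := by omega
  haveI : FiniteDimensional ℂ (MvPolynomial (Fin n) ℂ ⧸ M0) := hfd0
  have hπinj : Function.Injective π :=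
    (LinearMap.injective_iff_surjective_of_finrank_eq_finrank h0eq).2 hπsurj
  have hGI0 : G ≤ I0 := by
    intro x hx
    have hx0 : π (M0.mkQ x) = 0 := by
      rw [hπ, Submodule.mkQ_apply, Submodule.mapQ_apply]
      exact (Submodule.Quotient.mk_eq_zero MG).2 hx
    have : M0.mkQ x = 0 := by
      apply hπinj
      rw [hx0, map_zero]
    exact (Submodule.Quotient.mk_eq_zero M0).1 (by rwa [Submodule.mkQ_apply] at this)
  exact le_antisymm hGI0 hI0G
end

section
/- Let A be the quotient of ℂ[r₁,…,r_n] by the ideal generated by the n relations Σ_{i+j=2k} (−1)^i r_i r_j = 0 for k = 1,…,n (conventions r₀ = 1, r_i = 0 for i > n). Then the 2^n square-free monomials r₁^{ε₁}⋯r_n^{ε_n} with ε_i ∈ {0,1} span A; moreover they form a ℂ-basis of A, so dim_ℂ A = 2^n. -/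
open MvPolynomial Finset

/-- The generator `rᵢ` (with `r₀ = 1` and `rᵢ = 0` for `i > n`). -/
noncomputable def rgenC (n : ℕ) (i : ℕ) : MvPolynomial (Fin n) ℂ :=
  if h : 1 ≤ i ∧ i ≤ n then X ⟨i - 1, by omega⟩
  else if i = 0 then 1 else 0

/-- The ideal generated by the relations `Σ_{i+j=2k} (−1)^i rᵢ rⱼ = 0`, `k = 1,…,n`
(indexed by `k = kk.val + 1` for `kk : Fin n`). -/
noncomputable def lagrIdeal (n : ℕ) : Ideal (MvPolynomial (Fin n) ℂ) :=
  Ideal.span {f | ∃ kk : Fin n,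
    f = ∑ i ∈ Finset.range (2 * (kk.val + 1) + 1),
      (-1 : MvPolynomial (Fin n) ℂ) ^ i * rgenC n i * rgenC n (2 * (kk.val + 1) - i)}

namespace LG

variable {n : ℕ}

/-- weight of the index `m` (as in `r_m`), concave in `m`. -/
def wt (n m : ℕ) : ℕ := m * (4 * n - m)

/-- weight of a variable -/
def cw (n : ℕ) (v : Fin n) : ℕ := wt n (v.val + 1)

lemma cw_pos (v : Fin n) : 1 ≤ cw n v := by
  have := v.isLt
  have h1 : 1 ≤ v.val + 1 := by omega
  have h2 : 1 ≤ 4 * n - (v.val + 1) := by omega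
  calc 1 = 1 * 1 := rfl
  _ ≤ _ := Nat.mul_le_mul h1 h2

/-- weighted degree of a monomial -/
def mu (n : ℕ) (a : Fin n →₀ ℕ) : ℕ := ∑ v, a v * cw n v

lemma mu_add (a b : Fin n →₀ ℕ) : mu n (a + b) = mu n a + mu n b := by
  unfold mu
  rw [← Finset.sum_add_distrib]
  refine Finset.sum_congr rfl fun v _ => ?_
  simp [add_mul]

lemma mu_single (v : Fin n) (e : ℕ) : mu n (Finsupp.single v e) = e * cw n v := by
  unfold mu
  rw [Finset.sum_eq_single v]
  · simp
  · intro u _ hu; simp [Finsupp.single_apply, Ne.symm hu]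
  · intro h; exact absurd (Finset.mem_univ v) h

lemma mu_eq_zero {a : Fin n →₀ ℕ} (h : mu n a = 0) : a = 0 := by
  ext v
  have := Finset.sum_eq_zero_iff.mp h v (Finset.mem_univ v)
  have hc := cw_pos v
  simp only [Finsupp.coe_zero, Pi.zero_apply]
  exact by nlinarith

/-- the `kk`-th relation -/
noncomputable def fk (n : ℕ) (kk : Fin n) : MvPolynomial (Fin n) ℂ :=
  ∑ i ∈ Finset.range (2 * (kk.val + 1) + 1),
      (-1 : MvPolynomial (Fin n) ℂ) ^ i * rgenC n i * rgenC n (2 * (kk.val + 1) - i)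

/-- the non-central part of the `kk`-th relation -/
noncomputable def eta (n : ℕ) (kk : Fin n) : MvPolynomial (Fin n) ℂ :=
  ∑ i ∈ (Finset.range (2 * (kk.val + 1) + 1)).erase (kk.val + 1),
      (-1 : MvPolynomial (Fin n) ℂ) ^ i * rgenC n i * rgenC n (2 * (kk.val + 1) - i)

noncomputable def eps (kk : Fin n) : ℂ := (-1) ^ (kk.val + 1)

lemma eps_mul_self (kk : Fin n) : eps kk * eps kk = 1 := by
  unfold eps
  rw [← pow_add]
  exact Even.neg_one_pow ⟨kk.val+1, by ring⟩

lemma lagrIdeal_eq (n : ℕ) : lagrIdeal n = Ideal.span (Set.range (fk n)) := by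
  unfold lagrIdeal
  congr 1
  ext f
  simp only [Set.mem_setOf_eq, Set.mem_range]
  exact ⟨fun ⟨kk, h⟩ => ⟨kk, h.symm⟩, fun ⟨kk, h⟩ => ⟨kk, h.symm⟩⟩

lemma fk_mem (kk : Fin n) : fk n kk ∈ lagrIdeal n := by
  rw [lagrIdeal_eq]
  exact Ideal.subset_span ⟨kk, rfl⟩

lemma rgen_central (kk : Fin n) : rgenC n (kk.val + 1) = X kk := by
  unfold rgenC
  rw [dif_pos ⟨by omega, by omega⟩]
  congr 1

lemma fk_eq (kk : Fin n) :
    fk n kk = C (eps kk) * (X kk * X kk) + eta n kk := by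
  unfold fk eta
  rw [← Finset.sum_erase_add _ _ (show kk.val + 1 ∈ Finset.range (2*(kk.val+1)+1) by
    simp), add_comm]
  congr 1
  have h2 : 2 * (kk.val + 1) - (kk.val + 1) = kk.val + 1 := by omega
  rw [h2, rgen_central]
  have : ((-1 : MvPolynomial (Fin n) ℂ)) ^ (kk.val + 1) = C (eps kk) := by
    unfold eps
    rw [map_pow, map_neg, map_one]
  rw [this]; ring

lemma rgen_support_mu {m : ℕ} {b : Fin n →₀ ℕ} (hb : b ∈ (rgenC n m).support) :
    mu n b = wt n m ∧ m ≤ n := by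
  unfold rgenC at hb
  split_ifs at hb with h1 h2
  · rw [support_X] at hb
    rw [Finset.mem_singleton] at hb
    subst hb
    rw [mu_single, one_mul]
    constructor
    · unfold cw
      have hm : m - 1 + 1 = m := by omega
      rw [hm]
    · exact h1.2
  · rw [show (1 : MvPolynomial (Fin n) ℂ) = monomial 0 1 from rfl, support_monomial] at hb
    simp only [one_ne_zero, if_false] at hb
    rw [Finset.mem_singleton] at hb
    subst hb
    subst h2
    constructor
    · simp [mu, wt]
    · omega
  · simp at hb

lemma wt_ineq {m i j k : ℕ} (hij : i + j = 2 * k) (hik : i ≠ k) (hk : 1 ≤ k)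
    (hkm : k ≤ m) (him : i ≤ m) (hjm : j ≤ m) :
    wt m i + wt m j + 1 ≤ 2 * wt m k := by
  unfold wt
  have hi4 : i ≤ 4 * m := by omega
  have hj4 : j ≤ 4 * m := by omega
  have hk4 : k ≤ 4 * m := by omega
  zify [hi4, hj4, hk4]
  have hne : (i : ℤ) ≠ (j : ℤ) := by
    intro h
    apply hik
    omega
  have h1 : 1 ≤ ((i : ℤ) - j) ^ 2 := by
    rcases hne.lt_or_gt with h | h <;> nlinarith
  have h2 : (i : ℤ) + j = 2 * k := by exact_mod_cast hij
  nlinarith [h1, h2]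

lemma support_neg_one_pow_mul (i : ℕ) (p : MvPolynomial (Fin n) ℂ) :
    ((-1 : MvPolynomial (Fin n) ℂ) ^ i * p).support ⊆ p.support := by
  rcases neg_one_pow_eq_or (MvPolynomial (Fin n) ℂ) i with h | h <;> rw [h]
  · rw [one_mul]
  · intro b hb
    rw [neg_one_mul, mem_support_iff, coeff_neg, neg_ne_zero] at hb
    exact mem_support_iff.mpr hb

lemma eta_support {kk : Fin n} {b : Fin n →₀ ℕ} (hb : b ∈ (eta n kk).support) :
    mu n b + 1 ≤ 2 * cw n kk := by
  classical
  unfold eta at hb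
  obtain ⟨i, hi, hb⟩ := Finset.mem_biUnion.mp (support_sum hb)
  rw [Finset.mem_erase, Finset.mem_range] at hi
  obtain ⟨hik, hirange⟩ := hi
  set k := kk.val + 1 with hkdef
  have hb2 : b ∈ ((rgenC n i * rgenC n (2 * k - i)).support) := by
    apply support_neg_one_pow_mul
    rw [mul_assoc] at hb
    exact hb
  obtain ⟨b1, hb1, b2, hb2', hbe⟩ := Finset.mem_add.mp (support_mul _ _ hb2)
  obtain ⟨hmu1, hi_le⟩ := rgen_support_mu hb1
  obtain ⟨hmu2, hj_le⟩ := rgen_support_mu hb2'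
  have hbsum : mu n b = wt n i + wt n (2 * k - i) := by
    rw [← hbe, mu_add, hmu1, hmu2]
  rw [hbsum]
  have : cw n kk = wt n k := rfl
  rw [this]
  exact wt_ineq (by omega) hik (by omega) (by omega) hi_le hj_le

lemma colon_aux : ∀ (c : ℕ) (u : MvPolynomial (Fin n) ℂ) (s : Finset (Fin n)),
    u.support.card = c →
    (∀ b ∈ u.support, ∃ k ∈ s, 2 ≤ b k) →
    ∃ v : Fin n → MvPolynomial (Fin n) ℂ,
      (∀ k, k ∉ s → v k = 0) ∧
      u = ∑ k, v k * (X k * X k) ∧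
      (∀ k, ∀ b ∈ (v k).support, b + Finsupp.single k 2 ∈ u.support) := by
  classical
  intro c
  induction c using Nat.strong_induction_on with
  | _ c ih =>
    intro u s hcard h
    by_cases hu : u = 0
    · refine ⟨fun _ => 0, fun _ _ => rfl, ?_, ?_⟩
      · simp [hu]
      · intro k b hb; simp at hb
    · have hne : u.support.Nonempty := MvPolynomial.support_nonempty.mpr hu
      obtain ⟨b₀, hb₀⟩ := hne
      obtain ⟨k₀, hk₀s, hbk⟩ := h b₀ hb₀
      set c₀ := coeff b₀ u with hc₀
      have hc₀ne : c₀ ≠ 0 := mem_support_iff.mp hb₀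
      set u' := u - monomial b₀ c₀ with hu'
      have hcoeff : ∀ b, coeff b u' = if b = b₀ then 0 else coeff b u := by
        intro b
        rw [hu', coeff_sub, coeff_monomial]
        split_ifs with h1 h2 h3
        · subst h1; rw [← hc₀]; ring
        · subst h1; exact absurd rfl h2
        · exact absurd h3.symm h1
        · ring
      have hsupp' : u'.support = u.support.erase b₀ := by
        ext b
        rw [mem_support_iff, hcoeff, Finset.mem_erase, mem_support_iff]
        split_ifs with h1
        · simp [h1]
        · simp [h1]
      have hcard' : u'.support.card < c := by
        rw [hsupp', ← hcard]
        exact Finset.card_erase_lt_of_mem hb₀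
      have hsub : u'.support ⊆ u.support := by
        rw [hsupp']; exact Finset.erase_subset _ _
      obtain ⟨v', hv'0, hv'sum, hv'supp⟩ := ih _ hcard' u' s rfl
        (fun b hb => h b (hsub hb))
      set b' := b₀ - Finsupp.single k₀ 2 with hb'def
      have hb' : b' + Finsupp.single k₀ 2 = b₀ := by
        ext i
        simp only [Finsupp.add_apply, hb'def, Finsupp.tsub_apply, Finsupp.single_apply]
        split_ifs with hik
        · subst hik; omega
        · omega
      have hXX : (X k₀ * X k₀ : MvPolynomial (Fin n) ℂ) =
          monomial (Finsupp.single k₀ 2) 1 := by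
        rw [← pow_two, X_pow_eq_monomial]
      have hsum : ∑ k, (v' k + if k = k₀ then monomial b' c₀ else 0) * (X k * X k)
          = (∑ k, v' k * (X k * X k)) + monomial b₀ c₀ := by
        simp only [add_mul, ite_mul, zero_mul]
        rw [Finset.sum_add_distrib, Finset.sum_ite_eq' Finset.univ k₀
          (fun k => monomial b' c₀ * (X k * X k))]
        simp only [Finset.mem_univ, if_true]
        rw [hXX, monomial_mul, mul_one, hb']
      refine ⟨fun k => v' k + if k = k₀ then monomial b' c₀ else 0, ?_, ?_, ?_⟩
      · intro k hk
        have hkne : k ≠ k₀ := fun he => hk (he ▸ hk₀s)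
        simp only [hv'0 k hk, if_neg hkne, add_zero]
      · rw [hsum, ← hv'sum, hu']
        ring
      · intro k b hb
        simp only at hb
        rcases Finset.mem_union.mp (Finsupp.support_add hb) with hb1 | hb2
        · exact hsub (hv'supp k b hb1)
        · split_ifs at hb2 with hk
          · subst hk
            have hbb : b = b' :=
              Finset.mem_singleton.mp (support_monomial_subset hb2)
            subst hbb
            rw [hb']
            exact hb₀
          · simp at hb2

lemma xx_eq (l : Fin n) : (X l * X l : MvPolynomial (Fin n) ℂ) =
    monomial (Finsupp.single l 2) 1 := by
  rw [← pow_two, X_pow_eq_monomial]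

lemma support_mul_xx {p : MvPolynomial (Fin n) ℂ} {l : Fin n} {b : Fin n →₀ ℕ}
    (hb : b ∈ (p * (X l * X l)).support) :
    ∃ b1 ∈ p.support, b = b1 + Finsupp.single l 2 := by
  classical
  rw [xx_eq] at hb
  obtain ⟨b1, hb1, b2, hb2, hbe⟩ := Finset.mem_add.mp (support_mul _ _ hb)
  refine ⟨b1, hb1, ?_⟩
  have : b2 = Finsupp.single l 2 :=
    Finset.mem_singleton.mp (support_monomial_subset hb2)
  rw [← hbe, this]

lemma coeff_mul_xx (p : MvPolynomial (Fin n) ℂ) (l : Fin n) (b : Fin n →₀ ℕ) :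
    coeff (b + Finsupp.single l 2) (p * (X l * X l)) = coeff b p := by
  rw [xx_eq, coeff_mul_monomial, mul_one]

lemma koszul : ∀ (m : ℕ) (D : ℕ) (u : Fin n → MvPolynomial (Fin n) ℂ),
    (∀ k : Fin n, m ≤ k.val → u k = 0) →
    (∑ k, u k * (X k * X k)) = 0 →
    (∀ k, ∀ b ∈ (u k).support, mu n b + 2 * cw n k ≤ D) →
    ∃ w : Fin n → Fin n → MvPolynomial (Fin n) ℂ,
      (∀ k l, w k l = - w l k) ∧
      (∀ k l, ∀ b ∈ (w k l).support, mu n b + 2 * cw n k + 2 * cw n l ≤ D) ∧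
      (∀ k l : Fin n, m ≤ k.val ∨ m ≤ l.val → w k l = 0) ∧
      (∀ k, u k = ∑ l, w k l * (X l * X l)) := by
  classical
  intro m
  induction m with
  | zero =>
    intro D u hz _ _
    refine ⟨fun _ _ => 0, fun k l => by rw [neg_zero], fun k l b hb => by simp at hb,
      fun _ _ _ => rfl, ?_⟩
    intro k
    rw [hz k (Nat.zero_le _)]
    simp
  | succ m ih =>
    intro D u hz hsum hbnd
    by_cases hm : m < n
    · set km : Fin n := ⟨m, hm⟩ with hkm
      have h2 : u km * (X km * X km) = - ∑ k ∈ Finset.univ.erase km, u k * (X k * X k) := by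
        have h0 := hsum
        rw [← Finset.sum_erase_add Finset.univ _ (Finset.mem_univ km)] at h0
        exact eq_neg_of_add_eq_zero_right h0
      have key : ∀ b ∈ (u km).support, ∃ k ∈ Finset.univ.filter (fun k : Fin n => k.val < m),
          2 ≤ b k := by
        intro b hb
        have h1 : coeff (b + Finsupp.single km 2) (u km * (X km * X km)) ≠ 0 := by
          rw [coeff_mul_xx]
          exact mem_support_iff.mp hb
        have h3 : (b + Finsupp.single km 2) ∈
            (∑ k ∈ Finset.univ.erase km, u k * (X k * X k)).support := by
          rw [← support_neg, ← h2]
          exact mem_support_iff.mpr h1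
        obtain ⟨k, hk_er, hmem⟩ := Finset.mem_biUnion.mp (support_sum h3)
        have hkne : k ≠ km := (Finset.mem_erase.mp hk_er).1
        obtain ⟨b1, _, heq⟩ := support_mul_xx hmem
        have hbk : 2 ≤ b k := by
          have h5 := DFunLike.congr_fun heq k
          simp only [Finsupp.add_apply, Finsupp.single_apply,
            if_neg (fun he : km = k => hkne he.symm)] at h5
          simp at h5
          omega
        have hkm' : k.val < m := by
          by_contra hge
          have hk1 : k.val < m + 1 := by
            by_contra hge2
            have : u k = 0 := hz k (by omega)
            rw [this] at hmem
            simp at hmem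
          have hkv : k.val = m := by omega
          exact hkne (Fin.ext hkv)
        exact ⟨k, Finset.mem_filter.mpr ⟨Finset.mem_univ k, hkm'⟩, hbk⟩
      obtain ⟨v, hv0, hvsum, hvsupp⟩ := colon_aux _ (u km) _ rfl key
      set u2 : Fin n → MvPolynomial (Fin n) ℂ :=
        fun k => if k.val < m then u k + v k * (X km * X km) else 0 with hu2
      have hu2z : ∀ k : Fin n, m ≤ k.val → u2 k = 0 := by
        intro k hk
        rw [hu2]
        simp only
        rw [if_neg (by omega)]
      have hvz : ∀ k : Fin n, ¬ k.val < m → v k = 0 := by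
        intro k hk
        exact hv0 k (fun hmem => hk (Finset.mem_filter.mp hmem).2)
      have gz : ∀ k : Fin n, k ≠ km → ¬ k.val < m → u k * (X k * X k) = 0 := by
        intro k hkne hge
        have : u k = 0 := by
          apply hz k
          have : k.val ≠ m := fun he => hkne (Fin.ext he)
          omega
        rw [this, zero_mul]
      have hu2sum : (∑ k, u2 k * (X k * X k)) = 0 := by
        have e0 : ∀ k : Fin n, u2 k * (X k * X k) =
            (if k.val < m then u k * (X k * X k) else 0)
            + (if k.val < m then v k * (X km * X km) * (X k * X k) else 0) := by
          intro k
          rw [hu2]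
          simp only
          split_ifs with h
          · ring
          · simp
        rw [Finset.sum_congr rfl (fun k _ => e0 k), Finset.sum_add_distrib]
        have eA : ∑ k : Fin n, (if k.val < m then u k * (X k * X k) else 0)
            = - (u km * (X km * X km)) := by
          have e1 : ∑ k : Fin n, (if k.val < m then u k * (X k * X k) else 0)
              + ∑ k : Fin n, (if k.val < m then 0 else u k * (X k * X k)) = 0 := by
            rw [← Finset.sum_add_distrib]
            have ept : ∀ k : Fin n, (if k.val < m then u k * (X k * X k) else 0)
                + (if k.val < m then 0 else u k * (X k * X k)) = u k * (X k * X k) := by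
              intro k
              split_ifs with h <;> simp
            rw [Finset.sum_congr rfl (fun k _ => ept k), hsum]
          have e2 : ∑ k : Fin n, (if k.val < m then (0 : MvPolynomial (Fin n) ℂ)
              else u k * (X k * X k)) = u km * (X km * X km) := by
            rw [Finset.sum_eq_single km]
            · rw [if_neg (by simp [hkm])]
            · intro k _ hkne
              split_ifs with h
              · rfl
              · exact gz k hkne h
            · intro h; exact absurd (Finset.mem_univ km) h
          rw [e2] at e1
          exact eq_neg_of_add_eq_zero_left e1
        have eB : ∑ k : Fin n, (if k.val < m then v k * (X km * X km) * (X k * X k) else 0)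
            = u km * (X km * X km) := by
          have e3 : ∀ k : Fin n, (if k.val < m then v k * (X km * X km) * (X k * X k) else 0)
              = v k * (X k * X k) * (X km * X km) := by
            intro k
            split_ifs with h
            · ring
            · rw [hvz k h]; ring
          rw [Finset.sum_congr rfl (fun k _ => e3 k), ← Finset.sum_mul, ← hvsum]
        rw [eA, eB]
        ring
      have hu2bnd : ∀ k, ∀ b ∈ (u2 k).support, mu n b + 2 * cw n k ≤ D := by
        intro k b hb
        rw [hu2] at hb
        simp only at hb
        split_ifs at hb with h
        · rcases Finset.mem_union.mp (Finsupp.support_add hb) with hb1 | hb2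
          · exact hbnd k b hb1
          · obtain ⟨b1, hb1, heq⟩ := support_mul_xx hb2
            have hb1' := hvsupp k b1 hb1
            have hbnd1 := hbnd km _ hb1'
            rw [mu_add, mu_single] at hbnd1
            rw [heq, mu_add, mu_single]
            omega
        · simp at hb
      obtain ⟨w', hw'anti, hw'bnd, hw'z, hw'sum⟩ := ih D u2 hu2z hu2sum hu2bnd
      set aux : Fin n → Fin n → MvPolynomial (Fin n) ℂ :=
        fun k l => if k.val < m ∧ l = km then -(v k) else 0 with haux
      have hα : ∀ k : Fin n, ∑ l, (aux k l) * (X l * X l)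
          = if k.val < m then -(v k) * (X km * X km) else 0 := by
        intro k
        rw [Finset.sum_eq_single km]
        · rw [haux]
          simp only
          split_ifs with h1 h2 h3
          · rfl
          · exact absurd h1.1 h2
          · exact absurd ⟨h3, trivial⟩ h1
          · rw [zero_mul]
        · intro l _ hlne
          rw [haux]
          simp only
          rw [if_neg (fun hc => hlne hc.2), zero_mul]
        · intro h; exact absurd (Finset.mem_univ km) h
      have hβ : ∀ k : Fin n, ∑ l, (aux l k) * (X l * X l)
          = if k = km then -(u km) else 0 := by
        intro k
        split_ifs with hk
        · have ept : ∀ l : Fin n, (aux l k) * (X l * X l) = -(v l * (X l * X l)) := by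
            intro l
            rw [haux]
            simp only
            rw [hk]
            split_ifs with h1
            · ring
            · have hvl : v l = 0 := hvz l (fun hl => h1 ⟨hl, rfl⟩)
              rw [hvl]
              ring
          rw [Finset.sum_congr rfl (fun l _ => ept l), Finset.sum_neg_distrib, ← hvsum]
        · have ept : ∀ l : Fin n, (aux l k) * (X l * X l) = 0 := by
            intro l
            rw [haux]
            simp only
            rw [if_neg (fun hc => hk hc.2), zero_mul]
          rw [Finset.sum_congr rfl (fun l _ => ept l), Finset.sum_const_zero]
      refine ⟨fun k l => w' k l + aux k l - aux l k, ?_, ?_, ?_, ?_⟩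
      · intro k l
        show w' k l + aux k l - aux l k = -(w' l k + aux l k - aux k l)
        rw [hw'anti k l]
        ring
      · intro k l b hb
        simp only at hb
        have hb' : b ∈ ((w' k l + aux k l).support ∪ (-(aux l k)).support) := by
          apply Finsupp.support_add
          rw [sub_eq_add_neg] at hb
          exact hb
        rw [Finset.mem_union] at hb'
        rcases hb' with hb1 | hb2
        · rcases Finset.mem_union.mp (Finsupp.support_add hb1) with hc1 | hc2
          · exact hw'bnd k l b hc1
          · rw [haux] at hc2
            simp only at hc2
            split_ifs at hc2 with h1
            · have hc2' : b ∈ (v k).support := by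
                refine Finsupp.mem_support_iff.mpr fun h0 => Finsupp.mem_support_iff.mp hc2 ?_
                show coeff b (-(v k)) = 0
                rw [coeff_neg]
                have h0' : coeff b (v k) = 0 := h0
                rw [h0', neg_zero]
              have := hbnd km _ (hvsupp k b hc2')
              rw [mu_add, mu_single] at this
              rw [h1.2]
              omega
            · simp at hc2
        · rw [MvPolynomial.support_neg, haux] at hb2
          simp only at hb2
          split_ifs at hb2 with h1
          · have hb2' : b ∈ (v l).support := by
              refine Finsupp.mem_support_iff.mpr fun h0 => Finsupp.mem_support_iff.mp hb2 ?_
              show coeff b (-(v l)) = 0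
              rw [coeff_neg]
              have h0' : coeff b (v l) = 0 := h0
              rw [h0', neg_zero]
            have := hbnd km _ (hvsupp l b hb2')
            rw [mu_add, mu_single] at this
            rw [h1.2]
            omega
          · simp at hb2
      · intro k l hkl
        have hz1 : w' k l = 0 := by
          apply hw'z
          omega
        have hz2 : aux k l = 0 := by
          rw [haux]
          simp only
          rw [if_neg]
          rintro ⟨ha, hb⟩
          subst hb
          have : km.val = m := rfl
          omega
        have hz3 : aux l k = 0 := by
          rw [haux]
          simp only
          rw [if_neg]
          rintro ⟨ha, hb⟩
          subst hb
          have : km.val = m := rfl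
          omega
        show w' k l + aux k l - aux l k = 0
        rw [hz1, hz2, hz3]
        ring
      · intro k
        show u k = ∑ l, (w' k l + aux k l - aux l k) * (X l * X l)
        have expand : ∑ l, (w' k l + aux k l - aux l k) * (X l * X l)
            = (∑ l, w' k l * (X l * X l)) + (∑ l, aux k l * (X l * X l))
              - (∑ l, aux l k * (X l * X l)) := by
          rw [← Finset.sum_add_distrib, ← Finset.sum_sub_distrib]
          refine Finset.sum_congr rfl (fun l _ => ?_)
          ring
        rw [expand, ← hw'sum, hα, hβ]
        by_cases h1 : k.val < m
        · rw [if_pos h1, if_neg (by intro he; subst he; have : km.val = m := rfl; omega)]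
          rw [hu2]
          simp only
          rw [if_pos h1]
          ring
        · by_cases h2 : k = km
          · subst h2
            rw [if_neg h1, if_pos rfl]
            have : u2 km = 0 := hu2z km (by exact Nat.le_refl m)
            rw [this]
            ring
          · rw [if_neg h1, if_neg h2]
            have hu0 : u k = 0 := by
              apply hz
              have : k.val ≠ m := fun he => h2 (Fin.ext he)
              omega
            have : u2 k = 0 := hu2z k (by omega)
            rw [this, hu0]
            ring
    · obtain ⟨w, ha, hb, hc, hd⟩ := ih D u (fun k hk => hz k (by omega)) hsum hbnd
      exact ⟨w, ha, hb, fun k l hkl => hc k l (by omega), hd⟩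

lemma support_C_mul (a : ℂ) (p : MvPolynomial (Fin n) ℂ) : (C a * p).support ⊆ p.support := by
  rw [← smul_eq_C_mul]
  exact Finsupp.support_smul

lemma sum_antisym {A : Fin n → Fin n → MvPolynomial (Fin n) ℂ}
    (hA : ∀ k l, A k l = -A l k) : ∑ k, ∑ l, A k l = 0 := by
  have h1 : ∑ k, ∑ l, A k l = - ∑ k, ∑ l, A k l := by
    calc ∑ k, ∑ l, A k l = ∑ k, ∑ l, -(A l k) :=
          Finset.sum_congr rfl fun k _ => Finset.sum_congr rfl fun l _ => hA k l
    _ = - ∑ k, ∑ l, A l k := by simp [Finset.sum_neg_distrib]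
    _ = - ∑ k, ∑ l, A k l := by rw [Finset.sum_comm]
  have h2 : (2 : MvPolynomial (Fin n) ℂ) * (∑ k, ∑ l, A k l) = 0 := by
    rw [two_mul]; nth_rewrite 1 [h1]; ring
  rcases mul_eq_zero.mp h2 with h3 | h3
  · exact absurd h3 two_ne_zero
  · exact h3

/-- Central independence lemma: a square-free supported polynomial in the ideal is zero. -/
lemma main_ind : ∀ (D : ℕ) (p : MvPolynomial (Fin n) ℂ) (q : Fin n → MvPolynomial (Fin n) ℂ),
    (∀ k, ∀ b ∈ (q k).support, mu n b + 2 * cw n k ≤ D) →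
    p = ∑ k, q k * fk n k →
    (∀ b ∈ p.support, ∀ i, b i ≤ 1) →
    p = 0 := by
  classical
  intro D
  induction D with
  | zero =>
    intro p q hbnd hrep _
    have hq : ∀ k, q k = 0 := by
      intro k
      by_contra hne
      obtain ⟨b, hb⟩ := MvPolynomial.support_nonempty.mpr hne
      have := hbnd k b hb
      have := cw_pos (n := n) k
      omega
    rw [hrep, Finset.sum_congr rfl (fun k _ => by rw [hq k, zero_mul])]
    exact Finset.sum_const_zero
  | succ D ih =>
    intro p q hbnd hrep hsf
    set t : Fin n → MvPolynomial (Fin n) ℂ :=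
      fun k => AddMonoidAlgebra.ofCoeff
        (Finsupp.filter (fun b => mu n b + 2 * cw n k = D + 1) (AddMonoidAlgebra.coeff (q k))) with ht
    set s : Fin n → MvPolynomial (Fin n) ℂ := fun k => q k - t k with hs
    have hts : ∀ k, q k = t k + s k := by
      intro k
      rw [hs]; ring
    have htsupp : ∀ k, ∀ b ∈ (t k).support, mu n b + 2 * cw n k = D + 1 ∧ b ∈ (q k).support := by
      intro k b hb
      rw [ht] at hb
      simp only at hb
      have hval : (Finsupp.filter (fun b => mu n b + 2 * cw n k = D + 1)
            (AddMonoidAlgebra.coeff (q k))) b ≠ 0 :=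
        mem_support_iff.mp hb
      rw [Finsupp.filter_apply] at hval
      by_cases hpred : mu n b + 2 * cw n k = D + 1
      · rw [if_pos hpred] at hval
        exact ⟨hpred, mem_support_iff.mpr hval⟩
      · rw [if_neg hpred] at hval
        exact absurd rfl hval
    have hssupp : ∀ k, ∀ b ∈ (s k).support, mu n b + 2 * cw n k ≤ D := by
      intro k b hb
      have hval : (s k).coeff b ≠ 0 := mem_support_iff.mp hb
      have hsval : (s k).coeff b = (q k).coeff b - (t k).coeff b := by
        rw [hs]; rw [coeff_sub]
      by_cases hpred : mu n b + 2 * cw n k = D + 1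
      · exfalso
        have : (t k).coeff b = (q k).coeff b := by
          show (Finsupp.filter _ (AddMonoidAlgebra.coeff (q k))) b = _
          rw [Finsupp.filter_apply, if_pos hpred]
          rfl
        rw [hsval, this] at hval
        simp at hval
      · have hbq : b ∈ (q k).support := by
          by_contra hnq
          have h0 : (q k).coeff b = 0 := notMem_support_iff.mp hnq
          have h1 : (t k).coeff b = 0 := notMem_support_iff.mp
            (fun hmem => hnq ((htsupp k b hmem).2))
          rw [hsval, h0, h1] at hval
          simp at hval
        have := hbnd k b hbq
        omega
    set u : Fin n → MvPolynomial (Fin n) ℂ := fun k => C (eps k) * t k with hu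
    set W : MvPolynomial (Fin n) ℂ :=
      ∑ k, (q k * eta n k + C (eps k) * s k * (X k * X k)) with hW
    have hWsupp : ∀ b ∈ W.support, mu n b ≤ D := by
      intro b hb
      rw [hW] at hb
      obtain ⟨k, _, hmem⟩ := Finset.mem_biUnion.mp (support_sum hb)
      rcases Finset.mem_union.mp (Finsupp.support_add hmem) with h1 | h2
      · obtain ⟨b1, hb1, b2, hb2, hbe⟩ := Finset.mem_add.mp (support_mul _ _ h1)
        have hq1 := hbnd k b1 hb1
        have hq2 := eta_support hb2
        rw [← hbe, mu_add]
        omega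
      · have h2' : b ∈ (C (eps k) * (s k * (X k * X k))).support := by
          rw [← mul_assoc]; exact h2
        have h3 := support_C_mul _ _ h2'
        obtain ⟨b1, hb1, hbe⟩ := support_mul_xx h3
        have hq1 := hssupp k b1 hb1
        rw [hbe, mu_add, mu_single]
        omega
    have hZrep : p = (∑ k, u k * (X k * X k)) + W := by
      rw [hrep, hW, ← Finset.sum_add_distrib]
      refine Finset.sum_congr rfl (fun k _ => ?_)
      rw [hts k, fk_eq, hu]
      ring
    have hZzero : (∑ k, u k * (X k * X k)) = 0 := by
      have hZsupp : ∀ b ∈ (∑ k, u k * (X k * X k)).support,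
          mu n b = D + 1 ∧ ¬ (∀ i, b i ≤ 1) := by
        intro b hb
        obtain ⟨k, _, hmem⟩ := Finset.mem_biUnion.mp (support_sum hb)
        have h2' : b ∈ (C (eps k) * (t k * (X k * X k))).support := by
          rw [← mul_assoc]; rw [hu] at hmem; exact hmem
        have h3 := support_C_mul _ _ h2'
        obtain ⟨b1, hb1, hbe⟩ := support_mul_xx h3
        have hq1 := (htsupp k b1 hb1).1
        constructor
        · rw [hbe, mu_add, mu_single]
          omega
        · intro hall
          have := hall k
          rw [hbe] at this
          simp only [Finsupp.add_apply, Finsupp.single_apply] at this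
          simp at this
      by_contra hne
      obtain ⟨b, hb⟩ := MvPolynomial.support_nonempty.mpr hne
      obtain ⟨hmu, hnsf⟩ := hZsupp b hb
      have hcz : coeff b (∑ k, u k * (X k * X k)) ≠ 0 := mem_support_iff.mp hb
      have hcp : coeff b p = 0 := by
        by_contra hne2
        exact hnsf (hsf b (mem_support_iff.mpr hne2))
      have hcw : coeff b W = 0 := by
        by_contra hne2
        have := hWsupp b (mem_support_iff.mpr hne2)
        omega
      have : coeff b p = coeff b (∑ k, u k * (X k * X k)) + coeff b W := by
        rw [hZrep, coeff_add]
      rw [hcp, hcw, add_zero] at this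
      exact hcz this.symm
    have hubnd : ∀ k, ∀ b ∈ (u k).support, mu n b + 2 * cw n k ≤ D + 1 := by
      intro k b hb
      rw [hu] at hb
      have := support_C_mul _ _ hb
      exact le_of_eq (htsupp k b this).1
    obtain ⟨w, hwanti, hwbnd, _, hwsum⟩ := koszul n (D + 1) u
      (fun k hk => absurd k.isLt (by omega)) hZzero hubnd
    -- new representation
    set q' : Fin n → MvPolynomial (Fin n) ℂ :=
      fun l => s l + ∑ k, C (eps k) * C (eps l) * w k l * eta n k with hq'
    have hXXl : ∀ l : Fin n, (X l * X l : MvPolynomial (Fin n) ℂ)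
        = C (eps l) * fk n l - C (eps l) * eta n l := by
      intro l
      rw [fk_eq, mul_add, ← mul_assoc, ← map_mul, eps_mul_self, map_one, one_mul]
      ring
    have step1 : ∑ k, t k * fk n k = ∑ k, C (eps k) * u k * eta n k := by
      have e2 : ∀ k, t k * fk n k = u k * (X k * X k) + C (eps k) * u k * eta n k := by
        intro k
        have htk : t k = C (eps k) * u k := by
          rw [hu, ← mul_assoc, ← map_mul, eps_mul_self, map_one, one_mul]
        calc t k * fk n k = C (eps k) * u k * (C (eps k) * (X k * X k) + eta n k) := by
              rw [← htk, fk_eq]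
        _ = C (eps k * eps k) * (u k * (X k * X k)) + C (eps k) * u k * eta n k := by
              rw [map_mul]; ring
        _ = u k * (X k * X k) + C (eps k) * u k * eta n k := by
              rw [eps_mul_self, map_one, one_mul]
      rw [Finset.sum_congr rfl (fun k _ => e2 k), Finset.sum_add_distrib, hZzero, zero_add]
    have step2 : ∑ k, C (eps k) * u k * eta n k
        = ∑ l, (∑ k, C (eps k) * C (eps l) * w k l * eta n k) * fk n l := by
      calc ∑ k, C (eps k) * u k * eta n k
          = ∑ k, ∑ l, C (eps k) * w k l * (X l * X l) * eta n k := by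
            refine Finset.sum_congr rfl (fun k _ => ?_)
            rw [hwsum k, Finset.mul_sum, Finset.sum_mul]
            refine Finset.sum_congr rfl (fun l _ => ?_)
            ring
      _ = ∑ k, ∑ l, (C (eps k) * C (eps l) * w k l * eta n k * fk n l
            - C (eps k) * C (eps l) * w k l * eta n k * eta n l) := by
            refine Finset.sum_congr rfl (fun k _ => Finset.sum_congr rfl (fun l _ => ?_))
            rw [hXXl l]
            ring
      _ = (∑ k, ∑ l, C (eps k) * C (eps l) * w k l * eta n k * fk n l)
            - ∑ k, ∑ l, C (eps k) * C (eps l) * w k l * eta n k * eta n l := by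
            rw [← Finset.sum_sub_distrib]
            refine Finset.sum_congr rfl (fun k _ => ?_)
            rw [← Finset.sum_sub_distrib]
      _ = ∑ k, ∑ l, C (eps k) * C (eps l) * w k l * eta n k * fk n l := by
            rw [sum_antisym (A := fun k l => C (eps k) * C (eps l) * w k l * eta n k * eta n l)
              (fun k l => by
                show C (eps k) * C (eps l) * w k l * eta n k * eta n l
                  = -(C (eps l) * C (eps k) * w l k * eta n l * eta n k)
                rw [hwanti k l]
                ring), sub_zero]
      _ = ∑ l, ∑ k, C (eps k) * C (eps l) * w k l * eta n k * fk n l := Finset.sum_comm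
      _ = _ := by
            refine Finset.sum_congr rfl (fun l _ => ?_)
            rw [Finset.sum_mul]
    have hrep' : p = ∑ l, q' l * fk n l := by
      calc p = ∑ k, q k * fk n k := hrep
      _ = (∑ k, s k * fk n k) + ∑ k, t k * fk n k := by
            rw [← Finset.sum_add_distrib]
            refine Finset.sum_congr rfl (fun k _ => ?_)
            rw [hts k]
            ring
      _ = (∑ l, s l * fk n l)
            + ∑ l, (∑ k, C (eps k) * C (eps l) * w k l * eta n k) * fk n l := by
            rw [step1, step2]
      _ = ∑ l, q' l * fk n l := by
            rw [← Finset.sum_add_distrib]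
            refine Finset.sum_congr rfl (fun l _ => ?_)
            rw [hq']
            ring
    have hq'bnd : ∀ l, ∀ b ∈ (q' l).support, mu n b + 2 * cw n l ≤ D := by
      intro l b hb
      rw [hq'] at hb
      simp only at hb
      rcases Finset.mem_union.mp (Finsupp.support_add hb) with h1 | h2
      · exact hssupp l b h1
      · obtain ⟨k, _, hmem⟩ := Finset.mem_biUnion.mp (support_sum h2)
        have hexp : C (eps k) * C (eps l) * w k l * eta n k
            = C (eps k * eps l) * (w k l * eta n k) := by
          rw [map_mul]; ring
        rw [hexp] at hmem
        have h3 := support_C_mul _ _ hmem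
        obtain ⟨b1, hb1, b2, hb2, hbe⟩ := Finset.mem_add.mp (support_mul _ _ h3)
        have hw1 := hwbnd k l b1 hb1
        have he1 := eta_support hb2
        rw [← hbe, mu_add]
        omega
    exact ih p q' hq'bnd hrep' hsf

lemma sf_ideal_zero {p : MvPolynomial (Fin n) ℂ} (hp : p ∈ lagrIdeal n)
    (hsf : ∀ b ∈ p.support, ∀ i, b i ≤ 1) : p = 0 := by
  rw [lagrIdeal_eq] at hp
  obtain ⟨c, hc⟩ := (Submodule.mem_span_range_iff_exists_fun _).mp hp
  simp only [smul_eq_mul] at hc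
  refine main_ind (Finset.univ.sup
    (fun k : Fin n => (c k).support.sup (fun b => mu n b + 2 * cw n k))) p c ?_ hc.symm hsf
  intro k b hb
  calc mu n b + 2 * cw n k
      ≤ (c k).support.sup (fun b => mu n b + 2 * cw n k) :=
      Finset.le_sup (f := fun b => mu n b + 2 * cw n k) hb
  _ ≤ Finset.univ.sup (fun k : Fin n => (c k).support.sup (fun b => mu n b + 2 * cw n k)) :=
      Finset.le_sup (f := fun k : Fin n => (c k).support.sup (fun b => mu n b + 2 * cw n k))
        (Finset.mem_univ k)

lemma mk_smul (a : ℂ) (p : MvPolynomial (Fin n) ℂ) :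
    Ideal.Quotient.mk (lagrIdeal n) (a • p) = a • Ideal.Quotient.mk (lagrIdeal n) p :=
  map_smul (Ideal.Quotient.mkₐ ℂ (lagrIdeal n)) a p

lemma XX_decomp (l : Fin n) : (X l * X l : MvPolynomial (Fin n) ℂ)
    = C (eps l) * fk n l - C (eps l) * eta n l := by
  rw [fk_eq, mul_add, ← mul_assoc, ← map_mul, eps_mul_self, map_one, one_mul]
  ring

/-- the exponent finsupp attached to a Bool vector -/
noncomputable def epsupp (ε : Fin n → Bool) : Fin n →₀ ℕ :=
  Finsupp.equivFunOnFinite.symm (fun i => if ε i then 1 else 0)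

lemma epsupp_apply (ε : Fin n → Bool) (i : Fin n) :
    epsupp ε i = if ε i then 1 else 0 := rfl

lemma prod_if_eq_monomial (ε : Fin n → Bool) :
    (∏ i, if ε i then (X i : MvPolynomial (Fin n) ℂ) else 1) = monomial (epsupp ε) 1 := by
  rw [monomial_eq, map_one, one_mul,
    Finsupp.prod_fintype _ _ (fun i => pow_zero (X i : MvPolynomial (Fin n) ℂ))]
  refine Finset.prod_congr rfl (fun i _ => ?_)
  rw [epsupp_apply]
  by_cases h : ε i
  · rw [if_pos h, if_pos h, pow_one]
  · rw [if_neg h, if_neg h, pow_zero]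

lemma monomial_mem_span : ∀ (M : ℕ) (b : Fin n →₀ ℕ) (a : ℂ), mu n b ≤ M →
    Ideal.Quotient.mk (lagrIdeal n) (monomial b a) ∈
      Submodule.span ℂ (Set.range fun ε : Fin n → Bool =>
        Ideal.Quotient.mk (lagrIdeal n) (∏ i, if ε i then X i else 1)) := by
  classical
  intro M
  induction M using Nat.strong_induction_on with
  | _ M ihM =>
    intro b a hM
    by_cases hsf : ∀ i, b i ≤ 1
    · have hbe : epsupp (fun i => decide (b i = 1)) = b := by
        ext i
        rw [epsupp_apply]
        have := hsf i
        by_cases h : b i = 1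
        · rw [if_pos (by simpa using h), h]
        · rw [if_neg (by simpa using h)]
          omega
      have hmono : monomial b a
          = a • (∏ i, if (decide (b i = 1) : Bool) then (X i : MvPolynomial (Fin n) ℂ) else 1) := by
        rw [prod_if_eq_monomial, hbe, smul_monomial, smul_eq_mul, mul_one]
      rw [hmono, mk_smul]
      exact Submodule.smul_mem _ _ (Submodule.subset_span ⟨_, rfl⟩)
    · push_neg at hsf
      obtain ⟨i, hi⟩ := hsf
      have hi2 : 2 ≤ b i := hi
      set b' := b - Finsupp.single i 2 with hb'def
      have hb' : b' + Finsupp.single i 2 = b := by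
        ext j
        simp only [Finsupp.add_apply, hb'def, Finsupp.tsub_apply, Finsupp.single_apply]
        split_ifs with hij
        · subst hij; omega
        · omega
      have hkey : monomial b a = monomial b' a * (X i * X i) := by
        rw [xx_eq, monomial_mul, mul_one, hb']
      have hmub : mu n b = mu n b' + 2 * cw n i := by
        rw [← hb', mu_add, mu_single]
      set g := monomial b' a * (C (eps i) * eta n i) with hg
      have hgsupp : ∀ b'' ∈ g.support, mu n b'' + 1 ≤ mu n b := by
        intro b'' hb''
        rw [hg] at hb''
        obtain ⟨b1, hb1, b2, hb2, hbe⟩ := Finset.mem_add.mp (support_mul _ _ hb'')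
        have hb1' : b1 = b' := Finset.mem_singleton.mp (support_monomial_subset hb1)
        have hb2' := eta_support (support_C_mul _ _ hb2)
        rw [← hbe, mu_add, hb1', hmub]
        omega
      have hmk : Ideal.Quotient.mk (lagrIdeal n) (monomial b a)
          = - Ideal.Quotient.mk (lagrIdeal n) g := by
        rw [hkey, XX_decomp]
        have : monomial b' a * (C (eps i) * fk n i - C (eps i) * eta n i)
            = (monomial b' a * C (eps i)) * fk n i - g := by
          rw [hg]; ring
        rw [this, map_sub, Ideal.Quotient.eq_zero_iff_mem.mpr
          (Ideal.mul_mem_left _ _ (fk_mem i)), zero_sub]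
      rw [hmk]
      apply Submodule.neg_mem
      rw [← support_sum_monomial_coeff g, map_sum]
      apply Submodule.sum_mem
      intro b'' hb''
      have hlt : mu n b'' ≤ M - 1 := by
        have := hgsupp b'' hb''
        omega
      have hM1 : M - 1 < M := by
        have h1 := cw_pos (n := n) i
        omega
      exact ihM (M - 1) hM1 b'' _ hlt

lemma span_top :
    Submodule.span ℂ (Set.range fun ε : Fin n → Bool =>
        Ideal.Quotient.mk (lagrIdeal n) (∏ i, if ε i then X i else 1)) = ⊤ := by
  rw [eq_top_iff]
  intro x _
  obtain ⟨p, rfl⟩ := Ideal.Quotient.mk_surjective x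
  rw [← support_sum_monomial_coeff p, map_sum]
  apply Submodule.sum_mem
  intro b _
  exact monomial_mem_span (mu n b) b _ le_rfl

lemma epsupp_inj : Function.Injective (epsupp (n := n)) := by
  intro ε ε' h
  funext i
  have := DFunLike.congr_fun h i
  rw [epsupp_apply, epsupp_apply] at this
  by_cases h1 : ε i <;> by_cases h2 : ε' i <;> simp [h1, h2] at this ⊢

lemma lin_indep :
    LinearIndependent ℂ (fun ε : Fin n → Bool =>
        Ideal.Quotient.mk (lagrIdeal n) (∏ i, if ε i then X i else 1)) := by
  classical
  rw [Fintype.linearIndependent_iff]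
  intro c hc ε₀
  set P : MvPolynomial (Fin n) ℂ := ∑ ε : Fin n → Bool, monomial (epsupp ε) (c ε) with hP
  have hmkP : Ideal.Quotient.mk (lagrIdeal n) P = 0 := by
    rw [hP, map_sum, ← hc]
    refine Finset.sum_congr rfl (fun ε _ => ?_)
    rw [show (monomial (epsupp ε)) (c ε)
        = c ε • (∏ i, if ε i then (X i : MvPolynomial (Fin n) ℂ) else 1) from by
      rw [prod_if_eq_monomial, smul_monomial, smul_eq_mul, mul_one], mk_smul]
  have hPsf : ∀ b ∈ P.support, ∀ i, b i ≤ 1 := by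
    intro b hb i
    rw [hP] at hb
    obtain ⟨ε, _, hmem⟩ := Finset.mem_biUnion.mp (support_sum hb)
    have : b = epsupp ε := Finset.mem_singleton.mp (support_monomial_subset hmem)
    rw [this, epsupp_apply]
    split_ifs <;> omega
  have hP0 : P = 0 := sf_ideal_zero (Ideal.Quotient.eq_zero_iff_mem.mp hmkP) hPsf
  have hcoeff : coeff (epsupp ε₀) P = c ε₀ := by
    rw [hP]
    rw [show coeff (epsupp ε₀) (∑ ε : Fin n → Bool, monomial (epsupp ε) (c ε))
      = ∑ ε : Fin n → Bool, coeff (epsupp ε₀) (monomial (epsupp ε) (c ε)) by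
        exact (map_sum (coeffAddMonoidHom (epsupp ε₀)) _ _)]
    rw [Finset.sum_eq_single ε₀]
    · rw [coeff_monomial, if_pos rfl]
    · intro ε _ hne
      rw [coeff_monomial, if_neg (fun he => hne (epsupp_inj he))]
    · intro h; exact absurd (Finset.mem_univ ε₀) h
  rw [hP0] at hcoeff
  rw [← hcoeff]
  simp

end LG

/-- Let `A = ℂ[r₁,…,rₙ]/(Σ_{i+j=2k} (−1)^i rᵢ rⱼ = 0, k = 1,…,n)`.  Then the `2^n`
square-free monomials `r₁^{ε₁}⋯rₙ^{εₙ}` (`εᵢ ∈ {0,1}`) span `A`, form a `ℂ`-basis of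
`A`, and `dim_ℂ A = 2^n`. -/
theorem lagrangian_grassmannian_basis (n : ℕ) :
    Submodule.span ℂ (Set.range fun ε : Fin n → Bool =>
        Ideal.Quotient.mk (lagrIdeal n) (∏ i, if ε i then X i else 1)) = ⊤ ∧
    LinearIndependent ℂ (fun ε : Fin n → Bool =>
        Ideal.Quotient.mk (lagrIdeal n) (∏ i, if ε i then X i else 1)) ∧
    Module.finrank ℂ (MvPolynomial (Fin n) ℂ ⧸ lagrIdeal n) = 2 ^ n := by
  refine ⟨LG.span_top, LG.lin_indep, ?_⟩
  have hb : Module.Basis (Fin n → Bool) ℂ (MvPolynomial (Fin n) ℂ ⧸ lagrIdeal n) :=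
    Module.Basis.mk LG.lin_indep (by rw [LG.span_top])
  rw [Module.finrank_eq_card_basis hb, Fintype.card_fun]
  simp
end

section
/- Let K = S(O(k) × O(m)) embedded block-diagonally in SO(k+m) with k = 2p and m = 2q both even, let 𝔱 be the Cartan subalgebra of block-diagonal matrices with 2×2 blocks t_i J (J the standard 2×2 rotation generator), and let s = diag(1,…,1,−1,1,…,1,−1) be the chosen representative of the non-identity component of K. Then the adjoint action of s normalizes 𝔱 and acts on coordinates by (t₁,…,t_{p−1},t_p,t_{p+1},…,t_{p+q−1},t_{p+q}) ↦ (t₁,…,t_{p−1},−t_p,t_{p+1},…,t_{p+q−1},−t_{p+q}); consequently the group-theoretic Weyl group W_K = N_K(𝔱)/Z_K(𝔱) is the group S(B_p × B_q) of permutations and sign changes within the first p and last q coordinates with an even total number of sign changes. -/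
/-- The element of the Cartan subalgebra `𝔱 ⊂ 𝔰𝔬(2p+2q)` which is block diagonal with
`2×2` blocks `t₁J, …, t_{p+q}J`, where `J = [[0,1],[-1,0]]`. -/
noncomputable def tmat (p q : ℕ) (t : Fin (p + q) → ℝ) :
    Matrix (Fin (2 * (p + q))) (Fin (2 * (p + q))) ℝ :=
  Matrix.of fun i j =>
    if hij : (i : ℕ) / 2 = (j : ℕ) / 2 then
      if (i : ℕ) % 2 = 0 ∧ (j : ℕ) % 2 = 1 then t ⟨(i : ℕ) / 2, by omega⟩
      else if (i : ℕ) % 2 = 1 ∧ (j : ℕ) % 2 = 0 then -t ⟨(i : ℕ) / 2, by omega⟩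
      else 0
    else 0

/-- The chosen representative `s = diag(1,…,1,−1,1,…,1,−1)` of the non-identity
component of `K = S(O(2p) × O(2q))` (the `−1`s in positions `2p` and `2p+2q`). -/
noncomputable def smat (p q : ℕ) : Matrix (Fin (2 * (p + q))) (Fin (2 * (p + q))) ℝ :=
  Matrix.diagonal fun i =>
    if (i : ℕ) = 2 * p - 1 ∨ (i : ℕ) = 2 * (p + q) - 1 then (-1 : ℝ) else 1

/-- `K = S(O(2p) × O(2q))` inside `SO(2p+2q)`, as a set of matrices. -/
def Kset (p q : ℕ) : Set (Matrix (Fin (2 * (p + q))) (Fin (2 * (p + q))) ℝ) :=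
  {g | g * g.transpose = 1 ∧ g.det = 1 ∧
    ∀ i j : Fin (2 * (p + q)), (((i : ℕ) < 2 * p ∧ 2 * p ≤ (j : ℕ)) ∨
            ((j : ℕ) < 2 * p ∧ 2 * p ≤ (i : ℕ))) → g i j = 0}

lemma tmat_apply (p q : ℕ) (t : Fin (p + q) → ℝ) (i j : Fin (2 * (p + q))) :
    tmat p q t i j =
      if (i : ℕ) / 2 = (j : ℕ) / 2 then
        if (i : ℕ) % 2 = 0 ∧ (j : ℕ) % 2 = 1 then t ⟨(i : ℕ) / 2, by omega⟩
        else if (i : ℕ) % 2 = 1 ∧ (j : ℕ) % 2 = 0 then -t ⟨(i : ℕ) / 2, by omega⟩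
        else 0
      else 0 := by
  simp only [tmat, Matrix.of_apply]
  split_ifs <;> rfl

def psiE (n : ℕ) : Fin 2 × Fin n ≃ Fin (2 * n) where
  toFun x := ⟨2 * (x.2 : ℕ) + (x.1 : ℕ), by have := x.1.isLt; have := x.2.isLt; omega⟩
  invFun i := (⟨(i : ℕ) % 2, by omega⟩, ⟨(i : ℕ) / 2, by have := i.isLt; omega⟩)
  left_inv := by
    rintro ⟨r, k⟩
    have h1 := r.isLt
    ext <;> simp <;> omega
  right_inv := by
    intro i
    have := i.isLt
    ext
    simp
    omega

lemma sum_double {n : ℕ} (H : Fin (2 * n) → ℝ) (h : Fin n → ℝ)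
    (hH : ∀ (r : Fin 2) (k : Fin n), H (psiE n (r, k)) = h k) :
    ∑ i, H i = 2 * ∑ k, h k := by
  rw [← Fintype.sum_equiv (psiE n) _ H (fun x => rfl)]
  rw [Fintype.sum_prod_type]
  simp only [hH]
  rw [Fin.sum_univ_two]
  ring

lemma prod_double {n : ℕ} (H : Fin (2 * n) → ℝ) (h0 h1 : Fin n → ℝ)
    (hH0 : ∀ k : Fin n, H (psiE n (0, k)) = h0 k)
    (hH1 : ∀ k : Fin n, H (psiE n (1, k)) = h1 k) :
    ∏ i, H i = (∏ k, h0 k) * ∏ k, h1 k := by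
  rw [← Fintype.prod_equiv (psiE n) _ H (fun x => rfl)]
  rw [Fintype.prod_prod_type]
  rw [Fin.prod_univ_two]
  simp only [hH0, hH1]

section entries
variable {p q : ℕ} {t : Fin (p + q) → ℝ} {i j : Fin (2 * (p + q))}

lemma tmat_ne (h : (i : ℕ) / 2 ≠ (j : ℕ) / 2) : tmat p q t i j = 0 := by
  rw [tmat_apply, if_neg h]

lemma tmat_par (h : (i : ℕ) % 2 = (j : ℕ) % 2) : tmat p q t i j = 0 := by
  rw [tmat_apply]; split_ifs <;> first | rfl | omega

lemma tmat_01 (k : Fin (p + q)) (hi : (i : ℕ) = 2 * (k : ℕ)) (hj : (j : ℕ) = 2 * (k : ℕ) + 1) :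
    tmat p q t i j = t k := by
  rw [tmat_apply, if_pos (by omega), if_pos (by omega)]
  exact congrArg t (Fin.ext (show (i : ℕ) / 2 = (k : ℕ) by omega))

lemma tmat_10 (k : Fin (p + q)) (hi : (i : ℕ) = 2 * (k : ℕ) + 1) (hj : (j : ℕ) = 2 * (k : ℕ)) :
    tmat p q t i j = -t k := by
  rw [tmat_apply, if_pos (by omega), if_neg (by omega), if_pos (by omega)]
  exact congrArg (fun x => -t x) (Fin.ext (show (i : ℕ) / 2 = (k : ℕ) by omega))

lemma tmat_mul_self (p q : ℕ) (t : Fin (p + q) → ℝ) :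
    tmat p q t * tmat p q t
      = Matrix.diagonal (fun i : Fin (2 * (p + q)) => -(t ⟨(i : ℕ) / 2, by omega⟩ ^ 2)) := by
  ext i j
  rw [Matrix.mul_apply]
  obtain ⟨k, hk⟩ : ∃ k : Fin (p + q), (k : ℕ) = (i : ℕ) / 2 := ⟨⟨(i : ℕ) / 2, by omega⟩, rfl⟩
  obtain ⟨a0, ha0⟩ : ∃ a0 : Fin (2 * (p + q)), (a0 : ℕ) = 2 * ((i : ℕ) / 2) + (1 - (i : ℕ) % 2) :=
    ⟨⟨2 * ((i : ℕ) / 2) + (1 - (i : ℕ) % 2), by omega⟩, rfl⟩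
  have hmk : (⟨(i : ℕ) / 2, by omega⟩ : Fin (p + q)) = k := Fin.ext (show (i : ℕ) / 2 = (k : ℕ) by omega)
  rw [Finset.sum_eq_single a0]
  · rcases eq_or_ne i j with hj | hji
    · subst hj
      rw [Matrix.diagonal_apply_eq, hmk]
      rcases Nat.mod_two_eq_zero_or_one (i : ℕ) with h0 | h1
      · have e1 : tmat p q t i a0 = t k := tmat_01 (i := i) (j := a0) k (by omega) (by omega)
        have e2 : tmat p q t a0 i = -t k := tmat_10 (i := a0) (j := i) k (by omega) (by omega)
        rw [e1, e2]; ring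
      · have e1 : tmat p q t i a0 = -t k := tmat_10 (i := i) (j := a0) k (by omega) (by omega)
        have e2 : tmat p q t a0 i = t k := tmat_01 (i := a0) (j := i) k (by omega) (by omega)
        rw [e1, e2]; ring
    · rw [Matrix.diagonal_apply_ne _ hji]
      rcases eq_or_ne ((j : ℕ) / 2) ((i : ℕ) / 2) with hj2 | hj2
      · have hijne : (i : ℕ) ≠ (j : ℕ) := fun h => hji (Fin.ext h)
        have : tmat p q t a0 j = 0 := tmat_par (by omega)
        rw [this, mul_zero]
      · have : tmat p q t a0 j = 0 := tmat_ne (by omega)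
        rw [this, mul_zero]
  · intro b _ hb
    rcases eq_or_ne ((b : ℕ) / 2) ((i : ℕ) / 2) with hb2 | hb2
    · rcases eq_or_ne ((b : ℕ) % 2) ((i : ℕ) % 2) with hb3 | hb3
      · have : tmat p q t i b = 0 := tmat_par (by omega)
        rw [this, zero_mul]
      · exact absurd (Fin.ext (show (b : ℕ) = (a0 : ℕ) by omega)) hb
    · have : tmat p q t i b = 0 := tmat_ne (by omega)
      rw [this, zero_mul]
  · intro h; exact absurd (Finset.mem_univ a0) h

lemma psiE_val {n : ℕ} (r : Fin 2) (k : Fin n) :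
    ((psiE n (r, k)) : ℕ) = 2 * (k : ℕ) + (r : ℕ) := rfl

lemma trace_tmat_sq (p q : ℕ) (t : Fin (p + q) → ℝ) :
    (tmat p q t * tmat p q t).trace = -(2 * ∑ k, t k ^ 2) := by
  rw [tmat_mul_self, Matrix.trace_diagonal]
  rw [sum_double _ (fun k => -(t k ^ 2)) ?_]
  · rw [Finset.sum_neg_distrib]; ring
  · intro r k
    have hr := r.isLt
    exact congrArg (fun x => -(t x ^ 2))
      (Fin.ext (show ((psiE (p + q) (r, k)) : ℕ) / 2 = (k : ℕ) by rw [psiE_val]; omega))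

lemma trace_tmat_four (p q : ℕ) (t : Fin (p + q) → ℝ) :
    ((tmat p q t * tmat p q t) * (tmat p q t * tmat p q t)).trace = 2 * ∑ k, t k ^ 4 := by
  rw [tmat_mul_self, Matrix.diagonal_mul_diagonal, Matrix.trace_diagonal]
  rw [sum_double _ (fun k => t k ^ 4) ?_]
  intro r k
  have hr := r.isLt
  have : (⟨((psiE (p + q) (r, k)) : ℕ) / 2, by omega⟩ : Fin (p + q)) = k :=
    Fin.ext (show ((psiE (p + q) (r, k)) : ℕ) / 2 = (k : ℕ) by rw [psiE_val]; omega)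
  rw [this]; ring

lemma smat_mem (p q : ℕ) (hp : 1 ≤ p) (hq : 1 ≤ q) : smat p q ∈ Kset p q := by
  set d : Fin (2 * (p + q)) → ℝ :=
    fun i => if (i : ℕ) = 2 * p - 1 ∨ (i : ℕ) = 2 * (p + q) - 1 then (-1 : ℝ) else 1 with hd
  have hsd : smat p q = Matrix.diagonal d := rfl
  refine ⟨?_, ?_, ?_⟩
  · have hfun : (fun i => d i * d i) = fun _ : Fin (2 * (p + q)) => (1 : ℝ) := by
      funext i
      have : d i = if (i : ℕ) = 2 * p - 1 ∨ (i : ℕ) = 2 * (p + q) - 1 then (-1 : ℝ) else 1 := rfl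
      rw [this]; split_ifs <;> norm_num
    rw [hsd, Matrix.diagonal_transpose, Matrix.diagonal_mul_diagonal, hfun, Matrix.diagonal_one]
  · rw [hsd, Matrix.det_diagonal]
    set a : Fin (2 * (p + q)) := ⟨2 * p - 1, by omega⟩ with ha
    set b : Fin (2 * (p + q)) := ⟨2 * (p + q) - 1, by omega⟩ with hb
    have hav : (a : ℕ) = 2 * p - 1 := rfl
    have hbv : (b : ℕ) = 2 * (p + q) - 1 := rfl
    have hdd : ∀ i : Fin (2 * (p + q)),
        d i = (if i = a then (-1 : ℝ) else 1) * (if i = b then (-1 : ℝ) else 1) := by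
      intro i
      by_cases h1 : i = a <;> by_cases h2 : i = b
      · exfalso; rw [h1] at h2; have := congrArg Fin.val h2; omega
      · subst h1
        have : d a = if (a : ℕ) = 2 * p - 1 ∨ (a : ℕ) = 2 * (p + q) - 1 then (-1 : ℝ) else 1 := rfl
        rw [if_pos rfl, if_neg h2, this, if_pos (Or.inl hav)]; ring
      · subst h2
        have : d b = if (b : ℕ) = 2 * p - 1 ∨ (b : ℕ) = 2 * (p + q) - 1 then (-1 : ℝ) else 1 := rfl
        rw [if_neg h1, if_pos rfl, this, if_pos (Or.inr hbv)]; ring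
      · have hv1 : (i : ℕ) ≠ 2 * p - 1 := fun h => h1 (Fin.ext (h.trans hav.symm))
        have hv2 : (i : ℕ) ≠ 2 * (p + q) - 1 := fun h => h2 (Fin.ext (h.trans hbv.symm))
        have : d i = if (i : ℕ) = 2 * p - 1 ∨ (i : ℕ) = 2 * (p + q) - 1 then (-1 : ℝ) else 1 := rfl
        rw [if_neg h1, if_neg h2, this, if_neg (by tauto)]; ring
    rw [Finset.prod_congr rfl (fun i _ => hdd i), Finset.prod_mul_distrib,
      Finset.prod_ite_eq' Finset.univ a (fun _ => (-1 : ℝ)),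
      Finset.prod_ite_eq' Finset.univ b (fun _ => (-1 : ℝ))]
    simp
  · intro i j hij
    rw [hsd]
    exact Matrix.diagonal_apply_ne _ (fun h => by subst h; omega)

lemma smat_conj (p q : ℕ) (hp : 1 ≤ p) (hq : 1 ≤ q) (t : Fin (p + q) → ℝ) :
    smat p q * tmat p q t * smat p q =
      tmat p q fun k => if (k : ℕ) = p - 1 ∨ (k : ℕ) = p + q - 1 then -t k else t k := by
  set t' : Fin (p + q) → ℝ :=
    fun k => if (k : ℕ) = p - 1 ∨ (k : ℕ) = p + q - 1 then -t k else t k with ht'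
  set d : Fin (2 * (p + q)) → ℝ :=
    fun i => if (i : ℕ) = 2 * p - 1 ∨ (i : ℕ) = 2 * (p + q) - 1 then (-1 : ℝ) else 1 with hd
  have hsd : smat p q = Matrix.diagonal d := rfl
  rw [hsd]
  ext i j
  rw [Matrix.mul_diagonal, Matrix.diagonal_mul]
  by_cases hb : (i : ℕ) / 2 = (j : ℕ) / 2
  · by_cases hpar : (i : ℕ) % 2 = (j : ℕ) % 2
    · rw [tmat_par hpar, tmat_par hpar]; ring
    · obtain ⟨k, hk⟩ : ∃ k : Fin (p + q), (k : ℕ) = (i : ℕ) / 2 := ⟨⟨(i : ℕ) / 2, by omega⟩, rfl⟩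
      have hdi : d i = if (i : ℕ) = 2 * p - 1 ∨ (i : ℕ) = 2 * (p + q) - 1 then (-1 : ℝ) else 1 := rfl
      have hdj : d j = if (j : ℕ) = 2 * p - 1 ∨ (j : ℕ) = 2 * (p + q) - 1 then (-1 : ℝ) else 1 := rfl
      have ht'k : t' k = if (k : ℕ) = p - 1 ∨ (k : ℕ) = p + q - 1 then -t k else t k := rfl
      rcases Nat.mod_two_eq_zero_or_one (i : ℕ) with h0 | h1
      · have eL : tmat p q t i j = t k := tmat_01 (i := i) (j := j) k (by omega) (by omega)
        have eR : tmat p q t' i j = t' k := tmat_01 (i := i) (j := j) k (by omega) (by omega)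
        rw [eL, eR, hdi, hdj, ht'k]
        split_ifs <;> first | (exfalso; omega) | ring1
      · have eL : tmat p q t i j = -t k := tmat_10 (i := i) (j := j) k (by omega) (by omega)
        have eR : tmat p q t' i j = -t' k := tmat_10 (i := i) (j := j) k (by omega) (by omega)
        rw [eL, eR, hdi, hdj, ht'k]
        split_ifs <;> first | (exfalso; omega) | ring1
  · rw [tmat_ne hb, tmat_ne hb]; ring

lemma tmat_zero (p q : ℕ) : tmat p q 0 = 0 := by
  ext i j
  rw [tmat_apply]
  split_ifs <;> simp

lemma tmat_add (p q : ℕ) (s t : Fin (p + q) → ℝ) :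
    tmat p q (s + t) = tmat p q s + tmat p q t := by
  ext i j
  simp only [tmat_apply, Matrix.add_apply, Pi.add_apply]
  split_ifs <;> ring

lemma tmat_smul (p q : ℕ) (c : ℝ) (t : Fin (p + q) → ℝ) :
    tmat p q (c • t) = c • tmat p q t := by
  ext i j
  simp only [tmat_apply, Matrix.smul_apply, Pi.smul_apply, smul_eq_mul]
  split_ifs <;> ring

lemma tmat_sum (p q : ℕ) {ι : Type*} (s : Finset ι) (F : ι → (Fin (p + q) → ℝ)) :
    tmat p q (∑ j ∈ s, F j) = ∑ j ∈ s, tmat p q (F j) := by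
  classical
  induction s using Finset.induction_on with
  | empty => simpa using tmat_zero p q
  | insert _ _ hnot ih =>
    rw [Finset.sum_insert hnot, Finset.sum_insert hnot, tmat_add, ih]

lemma tmat_inj {p q : ℕ} {s t : Fin (p + q) → ℝ} (h : tmat p q s = tmat p q t) : s = t := by
  funext k
  obtain ⟨i, hi⟩ : ∃ i : Fin (2 * (p + q)), (i : ℕ) = 2 * (k : ℕ) := ⟨⟨2 * k, by omega⟩, rfl⟩
  obtain ⟨j, hj⟩ : ∃ j : Fin (2 * (p + q)), (j : ℕ) = 2 * (k : ℕ) + 1 := ⟨⟨2 * k + 1, by omega⟩, rfl⟩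
  have e1 : tmat p q s i j = s k := tmat_01 (i := i) (j := j) k hi hj
  have e2 : tmat p q t i j = t k := tmat_01 (i := i) (j := j) k hi hj
  rw [← e1, ← e2, h]

lemma conj_linear {p q : ℕ} (g : Matrix (Fin (2 * (p + q))) (Fin (2 * (p + q))) ℝ)
    (f : (Fin (p + q) → ℝ) → Fin (p + q) → ℝ)
    (hf : ∀ t, g * tmat p q t * g.transpose = tmat p q (f t)) (t : Fin (p + q) → ℝ) :
    f t = (Matrix.of fun k j => f (Pi.single j 1) k).mulVec t := by
  classical
  have ht : t = ∑ j, t j • (Pi.single j 1 : Fin (p + q) → ℝ) := by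
    funext k
    rw [Finset.sum_apply]
    rw [Finset.sum_eq_single k]
    · simp
    · intro b _ hb; simp [Pi.single_apply, hb.symm]
    · intro h; exact absurd (Finset.mem_univ k) h
  have key : tmat p q (f t) = tmat p q (∑ j, t j • f (Pi.single j 1)) := by
    rw [← hf]
    conv_lhs => rw [ht]
    rw [tmat_sum]
    have : ∀ j : Fin (p + q), tmat p q (t j • (Pi.single j 1 : Fin (p + q) → ℝ)) = t j • tmat p q (Pi.single j 1) :=
      fun j => tmat_smul p q (t j) _
    rw [Finset.sum_congr rfl (fun j _ => this j), Finset.mul_sum, Finset.sum_mul]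
    have : ∀ j : Fin (p + q),
        g * (t j • tmat p q (Pi.single j 1)) * g.transpose = t j • tmat p q (f (Pi.single j 1)) := by
      intro j
      rw [Matrix.mul_smul, Matrix.smul_mul, hf]
    rw [Finset.sum_congr rfl (fun j _ => this j)]
    rw [tmat_sum]
    exact Finset.sum_congr rfl (fun j _ => (tmat_smul p q (t j) _).symm)
  have := tmat_inj key
  funext k
  rw [this]
  rw [Finset.sum_apply, Matrix.mulVec]
  simp only [Pi.smul_apply, smul_eq_mul, Matrix.of_apply]
  rw [dotProduct]
  exact Finset.sum_congr rfl (fun j _ => by ring)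

lemma signed_perm_of_norms {n : ℕ} (A : Matrix (Fin n) (Fin n) ℝ)
    (h2 : ∀ x : Fin n → ℝ, ∑ k, (A.mulVec x k) ^ 2 = ∑ k, x k ^ 2)
    (h4 : ∀ x : Fin n → ℝ, ∑ k, (A.mulVec x k) ^ 4 = ∑ k, x k ^ 4) :
    ∃ (σ : Equiv.Perm (Fin n)) (ε : Fin n → ℝ), (∀ k, ε k = 1 ∨ ε k = -1) ∧
      ∀ k j, A k j = if j = σ⁻¹ k then ε k else 0 := by
  classical
  have hcol : ∀ (i : Fin n) (k : Fin n), A.mulVec (Pi.single i 1) k = A k i := by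
    intro i k
    rw [Matrix.mulVec, dotProduct, Finset.sum_eq_single i]
    · simp
    · intro b _ hb; simp [Pi.single_apply, hb]
    · intro h; exact absurd (Finset.mem_univ i) h
  have hsingle : ∀ (i : Fin n) (m : ℕ), 1 ≤ m → ∑ k, (Pi.single i 1 : Fin n → ℝ) k ^ m = 1 := by
    intro i m hm
    rw [Finset.sum_eq_single i]
    · simp
    · intro b _ hb; simp [Pi.single_apply, hb, zero_pow (by omega : m ≠ 0)]
    · intro h; exact absurd (Finset.mem_univ i) h
  have hc2 : ∀ i, ∑ k, A k i ^ 2 = 1 := by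
    intro i
    have := h2 (Pi.single i 1)
    rw [Finset.sum_congr rfl (fun k _ => by rw [hcol]), hsingle i 2 (by norm_num)] at this
    exact this
  have hc4 : ∀ i, ∑ k, A k i ^ 4 = 1 := by
    intro i
    have := h4 (Pi.single i 1)
    rw [Finset.sum_congr rfl (fun k _ => by rw [hcol]), hsingle i 4 (by norm_num)] at this
    exact this
  -- each column entry is 0 or ±1
  have hsq : ∀ i k, A k i = 0 ∨ A k i ^ 2 = 1 := by
    intro i k
    have hle : ∀ k', A k' i ^ 2 ≤ 1 := by
      intro k'
      calc A k' i ^ 2 ≤ ∑ k'', A k'' i ^ 2 :=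
            Finset.single_le_sum (f := fun k'' => A k'' i ^ 2) (fun k'' _ => sq_nonneg _)
              (Finset.mem_univ k')
        _ = 1 := hc2 i
    have hzero : ∑ k', (A k' i ^ 2 - A k' i ^ 4) = 0 := by
      rw [Finset.sum_sub_distrib, hc2 i, hc4 i]; ring
    have hterm : A k i ^ 2 - A k i ^ 4 = 0 := by
      have := (Finset.sum_eq_zero_iff_of_nonneg (fun k' _ => by nlinarith [sq_nonneg (A k' i), hle k'])).mp hzero k (Finset.mem_univ k)
      exact this
    rcases mul_eq_zero.mp (show A k i ^ 2 * (1 - A k i ^ 2) = 0 by nlinarith) with h | h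
    · left; exact pow_eq_zero_iff (by norm_num) |>.mp h
    · right; nlinarith
  -- orthogonality of distinct columns
  have horth : ∀ i i', i ≠ i' → ∑ k, A k i * A k i' = 0 := by
    intro i i' hii
    have hx := h2 (Pi.single i 1 + Pi.single i' 1)
    have hXL : ∀ k, A.mulVec (Pi.single i 1 + Pi.single i' 1) k = A k i + A k i' := by
      intro k; rw [Matrix.mulVec_add]; simp [hcol]
    have hXR : ∀ k, ((Pi.single i 1 + Pi.single i' 1) : Fin n → ℝ) k ^ 2
        = (Pi.single i 1 : Fin n → ℝ) k ^ 2 + (Pi.single i' 1 : Fin n → ℝ) k ^ 2 := by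
      intro k
      rcases eq_or_ne k i with rfl | hki <;> rcases eq_or_ne k i' with rfl | hki'
      · exact absurd rfl hii
      · simp [Pi.single_apply, hki']
      · simp [Pi.single_apply, hki]
      · simp [Pi.single_apply, hki, hki']
    rw [Finset.sum_congr rfl (fun k _ => by rw [hXL k])] at hx
    rw [Finset.sum_congr rfl (fun k _ => hXR k), Finset.sum_add_distrib,
      hsingle i 2 (by norm_num), hsingle i' 2 (by norm_num)] at hx
    have expand : ∀ k, (A k i + A k i') ^ 2 = A k i ^ 2 + A k i' ^ 2 + 2 * (A k i * A k i') :=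
      fun k => by ring
    rw [Finset.sum_congr rfl (fun k _ => expand k), Finset.sum_add_distrib,
      Finset.sum_add_distrib, hc2 i, hc2 i', ← Finset.mul_sum] at hx
    linarith
  -- A * Aᵀ = 1, hence row norms are 1
  have hAtA : A.transpose * A = 1 := by
    ext i i'
    rw [Matrix.mul_apply]
    simp only [Matrix.transpose_apply]
    rcases eq_or_ne i i' with rfl | hii
    · rw [Matrix.one_apply_eq]
      rw [Finset.sum_congr rfl (fun k _ => by rw [← sq])]
      exact hc2 i
    · rw [Matrix.one_apply_ne hii]
      exact horth i i' hii
  have hAAt : A * A.transpose = 1 := mul_eq_one_comm.mp hAtA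
  have hrow : ∀ k, ∑ j, A k j ^ 2 = 1 := by
    intro k
    have := congrFun (congrFun hAAt k) k
    rw [Matrix.mul_apply, Matrix.one_apply_eq] at this
    simp only [Matrix.transpose_apply] at this
    rw [Finset.sum_congr rfl (fun j _ => by rw [← sq])] at this
    exact this
  -- unique nonzero entry in each column
  have hcolu : ∀ i, ∃ k, A k i ≠ 0 ∧ ∀ k', k' ≠ k → A k' i = 0 := by
    intro i
    set s : Finset (Fin n) := Finset.univ.filter (fun k => A k i ≠ 0) with hs
    have hsum : ∑ k ∈ s, A k i ^ 2 = 1 := by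
      rw [← hc2 i]
      apply Finset.sum_subset (Finset.filter_subset _ _)
      intro x _ hx
      rw [Finset.mem_filter] at hx
      push_neg at hx
      have : A x i = 0 := hx (Finset.mem_univ x)
      rw [this]; ring
    have hone : ∀ k ∈ s, A k i ^ 2 = 1 := by
      intro k hk
      rw [Finset.mem_filter] at hk
      rcases hsq i k with h | h
      · exact absurd h hk.2
      · exact h
    have hcard : (s.card : ℝ) = 1 := by
      rw [← hsum, Finset.sum_congr rfl hone, Finset.sum_const, nsmul_eq_mul, mul_one]
    have : s.card = 1 := by exact_mod_cast hcard
    obtain ⟨k0, hk0⟩ := Finset.card_eq_one.mp this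
    refine ⟨k0, ?_, ?_⟩
    · have : k0 ∈ s := hk0 ▸ Finset.mem_singleton_self k0
      rw [Finset.mem_filter] at this
      exact this.2
    · intro k' hk'
      by_contra hne
      have : k' ∈ s := by rw [hs]; rw [Finset.mem_filter]; exact ⟨Finset.mem_univ k', hne⟩
      rw [hk0, Finset.mem_singleton] at this
      exact hk' this
  choose r hr1 hr2 using hcolu
  have hrinj : Function.Injective r := by
    intro i i' hii
    by_contra hne
    have h1 : A (r i) i ^ 2 = 1 := by
      rcases hsq i (r i) with h | h
      · exact absurd h (hr1 i)
      · exact h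
    have h2' : A (r i) i' ^ 2 = 1 := by
      rw [hii]
      rcases hsq i' (r i') with h | h
      · exact absurd h (hr1 i')
      · exact h
    have hle : A (r i) i ^ 2 + A (r i) i' ^ 2 ≤ ∑ j, A (r i) j ^ 2 := by
      rw [show A (r i) i ^ 2 + A (r i) i' ^ 2
          = ∑ j ∈ ({i, i'} : Finset (Fin n)), A (r i) j ^ 2 from
        (Finset.sum_pair (f := fun j => A (r i) j ^ 2) hne).symm]
      exact Finset.sum_le_sum_of_subset_of_nonneg (Finset.subset_univ _)
        (fun j _ _ => sq_nonneg _)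
    rw [hrow (r i)] at hle
    rw [h1, h2'] at hle
    linarith
  let σ : Equiv.Perm (Fin n) := Equiv.ofBijective r (Finite.injective_iff_bijective.mp hrinj)
  have hσ : ∀ j, σ j = r j := fun j => rfl
  refine ⟨σ, fun k => A k (σ⁻¹ k), ?_, ?_⟩
  · intro k
    have h1 : A (r (σ⁻¹ k)) (σ⁻¹ k) ^ 2 = 1 := by
      rcases hsq (σ⁻¹ k) (r (σ⁻¹ k)) with h | h
      · exact absurd h (hr1 _)
      · exact h
    have hrk : r (σ⁻¹ k) = k := by
      rw [← hσ]; exact σ.apply_symm_apply k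
    rw [hrk] at h1
    have h1' : A k (σ⁻¹ k) * A k (σ⁻¹ k) = 1 := by nlinarith
    exact mul_self_eq_one_iff.mp h1'
  · intro k j
    rcases eq_or_ne j (σ⁻¹ k) with rfl | hne
    · rw [if_pos rfl]
    · rw [if_neg hne]
      apply hr2 j
      intro hkr
      apply hne
      have hsj : σ j = k := by rw [hσ, hkr]
      rw [← hsj]
      exact (Equiv.symm_apply_apply σ j).symm

def dup {n : ℕ} (σ : Equiv.Perm (Fin n)) : Equiv.Perm (Fin (2 * n)) :=
  (psiE n).permCongr (Equiv.prodCongrRight fun _ : Fin 2 => σ)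

lemma dup_val {n : ℕ} (σ : Equiv.Perm (Fin n)) (i : Fin (2 * n)) (k : Fin n)
    (hk : (k : ℕ) = (i : ℕ) / 2) :
    ((dup σ i : Fin (2 * n)) : ℕ) = 2 * ((σ k : Fin n) : ℕ) + (i : ℕ) % 2 := by
  have h1 : (psiE n).symm i = (⟨(i : ℕ) % 2, by omega⟩, ⟨(i : ℕ) / 2, by omega⟩) := rfl
  have h2 : (⟨(i : ℕ) / 2, by omega⟩ : Fin n) = k := Fin.ext (show (i : ℕ) / 2 = (k : ℕ) by omega)
  have h3 : Equiv.prodCongrRight (fun _ : Fin 2 => σ)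
      ((⟨(i : ℕ) % 2, by omega⟩ : Fin 2), (⟨(i : ℕ) / 2, by omega⟩ : Fin n))
      = ((⟨(i : ℕ) % 2, by omega⟩ : Fin 2), σ (⟨(i : ℕ) / 2, by omega⟩ : Fin n)) := rfl
  rw [dup, Equiv.permCongr_apply, h1, h3, psiE_val, congrArg σ h2]

lemma sign_dup {n : ℕ} (σ : Equiv.Perm (Fin n)) : Equiv.Perm.sign (dup σ) = 1 := by
  rw [dup, Equiv.Perm.sign_permCongr, Equiv.Perm.sign_prodCongrRight]
  rw [Fin.prod_univ_two]
  exact Int.units_mul_self _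

lemma dup_inv {n : ℕ} (σ : Equiv.Perm (Fin n)) : (dup σ)⁻¹ = dup σ⁻¹ := by
  apply Equiv.ext
  intro i
  rw [Equiv.Perm.inv_eq_iff_eq]
  apply Fin.ext
  obtain ⟨k, hk⟩ : ∃ k : Fin n, (k : ℕ) = (i : ℕ) / 2 := ⟨⟨(i : ℕ) / 2, by omega⟩, rfl⟩
  have h1 : ((dup σ⁻¹ i : Fin (2 * n)) : ℕ) = 2 * ((σ⁻¹ k : Fin n) : ℕ) + (i : ℕ) % 2 :=
    dup_val σ⁻¹ i k hk
  have h2 : ((dup σ (dup σ⁻¹ i) : Fin (2 * n)) : ℕ)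
      = 2 * ((σ (σ⁻¹ k) : Fin n) : ℕ) + ((dup σ⁻¹ i : Fin (2 * n)) : ℕ) % 2 :=
    dup_val σ _ (σ⁻¹ k) (by omega)
  rw [h2, (show σ (σ⁻¹ k) = k from Equiv.apply_symm_apply σ k)]
  omega

noncomputable def gmat (p q : ℕ) (σ : Equiv.Perm (Fin (p + q))) (ε : Fin (p + q) → ℝ) :
    Matrix (Fin (2 * (p + q))) (Fin (2 * (p + q))) ℝ :=
  Matrix.diagonal (fun i : Fin (2 * (p + q)) =>
      if (i : ℕ) % 2 = 1 then ε ⟨(i : ℕ) / 2, by omega⟩ else 1) *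
    ((dup σ)⁻¹.permMatrix ℝ)

lemma gmat_apply (p q : ℕ) (σ : Equiv.Perm (Fin (p + q))) (ε : Fin (p + q) → ℝ)
    (x a : Fin (2 * (p + q))) :
    gmat p q σ ε x a = if a = (dup σ)⁻¹ x
      then (if (x : ℕ) % 2 = 1 then ε ⟨(x : ℕ) / 2, by omega⟩ else 1) else 0 := by
  rw [gmat, Matrix.diagonal_mul]
  rw [show (dup σ)⁻¹.permMatrix ℝ x a = if a = (dup σ)⁻¹ x then 1 else 0 from by
    rw [Equiv.Perm.permMatrix, PEquiv.toMatrix_apply, Equiv.toPEquiv_apply]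
    simp only [Option.mem_some_iff]
    exact if_congr eq_comm rfl rfl]
  rw [mul_ite, mul_one, mul_zero]

lemma gmat_orth (p q : ℕ) (σ : Equiv.Perm (Fin (p + q))) (ε : Fin (p + q) → ℝ)
    (hε : ∀ k, ε k = 1 ∨ ε k = -1) :
    gmat p q σ ε * (gmat p q σ ε).transpose = 1 := by
  ext i j
  rw [Matrix.mul_apply]
  rw [Finset.sum_eq_single ((dup σ)⁻¹ i)]
  · rw [Matrix.transpose_apply, gmat_apply, if_pos rfl, gmat_apply]
    rcases eq_or_ne i j with rfl | hij
    · rw [if_pos rfl, Matrix.one_apply_eq]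
      rcases hε ⟨(i : ℕ) / 2, by omega⟩ with h | h <;> split_ifs <;>
        first | (rw [h]; norm_num) | norm_num
    · rw [if_neg (fun h => hij (Equiv.injective ((dup σ)⁻¹ : Equiv.Perm (Fin (2 * (p + q)))) h)),
        Matrix.one_apply_ne hij, mul_zero]
  · intro b _ hb
    rw [gmat_apply, if_neg hb, zero_mul]
  · intro h; exact absurd (Finset.mem_univ _) h

lemma prod_d_eq (p q : ℕ) (ε : Fin (p + q) → ℝ) :
    (∏ i : Fin (2 * (p + q)),
      (if (i : ℕ) % 2 = 1 then ε ⟨(i : ℕ) / 2, by omega⟩ else 1)) = ∏ k, ε k := by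
  rw [prod_double _ (fun _ => (1 : ℝ)) ε ?_ ?_]
  · rw [Finset.prod_const_one, one_mul]
  · intro k
    rw [if_neg (by rw [psiE_val]; omega)]
  · intro k
    rw [if_pos (by rw [psiE_val]; omega)]
    exact congrArg ε (Fin.ext (show ((psiE (p + q) (1, k)) : ℕ) / 2 = (k : ℕ) by rw [psiE_val]; omega))

lemma gmat_det (p q : ℕ) (σ : Equiv.Perm (Fin (p + q))) (ε : Fin (p + q) → ℝ)
    (hprod : (∏ k, ε k) = 1) : (gmat p q σ ε).det = 1 := by
  rw [gmat, Matrix.det_mul, Matrix.det_diagonal, Matrix.det_permutation, Equiv.Perm.sign_inv,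
    sign_dup, prod_d_eq p q ε, hprod]
  norm_num

lemma gmat_block (p q : ℕ) (σ : Equiv.Perm (Fin (p + q))) (ε : Fin (p + q) → ℝ)
    (hblk : ∀ k : Fin (p + q), (k : ℕ) < p ↔ ((σ k : Fin (p + q)) : ℕ) < p)
    (i j : Fin (2 * (p + q)))
    (hij : (((i : ℕ) < 2 * p ∧ 2 * p ≤ (j : ℕ)) ∨ ((j : ℕ) < 2 * p ∧ 2 * p ≤ (i : ℕ)))) :
    gmat p q σ ε i j = 0 := by
  rw [gmat_apply]
  rcases eq_or_ne j ((dup σ)⁻¹ i) with rfl | hne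
  · exfalso
    obtain ⟨kj, hkj⟩ : ∃ k : Fin (p + q), (k : ℕ) = (((dup σ)⁻¹ i : Fin (2 * (p + q))) : ℕ) / 2 :=
      ⟨⟨_, by omega⟩, rfl⟩
    have hv : ((dup σ ((dup σ)⁻¹ i) : Fin (2 * (p + q))) : ℕ)
        = 2 * ((σ kj : Fin (p + q)) : ℕ) + (((dup σ)⁻¹ i : Fin (2 * (p + q))) : ℕ) % 2 :=
      dup_val σ _ kj hkj
    rw [(show dup σ ((dup σ)⁻¹ i) = i from Equiv.apply_symm_apply (dup σ) i)] at hv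
    have hb := hblk kj
    omega
  · rw [if_neg hne]

lemma gmat_conj (p q : ℕ) (σ : Equiv.Perm (Fin (p + q))) (ε : Fin (p + q) → ℝ)
    (t : Fin (p + q) → ℝ) :
    gmat p q σ ε * tmat p q t * (gmat p q σ ε).transpose
      = tmat p q (fun k => ε k * t (σ⁻¹ k)) := by
  ext i j
  rw [Matrix.mul_apply]
  obtain ⟨ki, hki⟩ : ∃ k : Fin (p + q), (k : ℕ) = (i : ℕ) / 2 := ⟨⟨_, by omega⟩, rfl⟩
  obtain ⟨kj, hkj⟩ : ∃ k : Fin (p + q), (k : ℕ) = (j : ℕ) / 2 := ⟨⟨_, by omega⟩, rfl⟩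
  have ha0 : (((dup σ)⁻¹ i : Fin (2 * (p + q))) : ℕ)
      = 2 * ((σ⁻¹ ki : Fin (p + q)) : ℕ) + (i : ℕ) % 2 := by
    rw [dup_inv]; exact dup_val σ⁻¹ i ki hki
  have hb0 : (((dup σ)⁻¹ j : Fin (2 * (p + q))) : ℕ)
      = 2 * ((σ⁻¹ kj : Fin (p + q)) : ℕ) + (j : ℕ) % 2 := by
    rw [dup_inv]; exact dup_val σ⁻¹ j kj hkj
  rw [Finset.sum_eq_single ((dup σ)⁻¹ j)]
  rotate_left
  · intro b _ hb
    rw [Matrix.transpose_apply, gmat_apply, if_neg hb, mul_zero]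
  · intro h; exact absurd (Finset.mem_univ _) h
  rw [Matrix.transpose_apply, gmat_apply, if_pos rfl, Matrix.mul_apply]
  rw [Finset.sum_eq_single ((dup σ)⁻¹ i)]
  rotate_left
  · intro a _ ha
    rw [gmat_apply, if_neg ha, zero_mul]
  · intro h; exact absurd (Finset.mem_univ _) h
  rw [gmat_apply, if_pos rfl]
  by_cases hb : (i : ℕ) / 2 = (j : ℕ) / 2
  · have hkij : ki = kj := Fin.ext (by omega)
    have hvk : ((σ⁻¹ kj : Fin (p + q)) : ℕ) = ((σ⁻¹ ki : Fin (p + q)) : ℕ) := by rw [hkij]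
    rcases Nat.mod_two_eq_zero_or_one (i : ℕ) with h0 | h1 <;>
      rcases Nat.mod_two_eq_zero_or_one (j : ℕ) with g0 | g1
    · rw [tmat_par (show (((dup σ)⁻¹ i : Fin (2 * (p + q))) : ℕ) % 2
          = (((dup σ)⁻¹ j : Fin (2 * (p + q))) : ℕ) % 2 by omega),
        tmat_par (show (i : ℕ) % 2 = (j : ℕ) % 2 by omega)]
      ring
    · have eT : tmat p q t ((dup σ)⁻¹ i) ((dup σ)⁻¹ j) = t (σ⁻¹ ki) :=
        tmat_01 (i := (dup σ)⁻¹ i) (j := (dup σ)⁻¹ j) (σ⁻¹ ki) (by omega) (by omega)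
      have eR : tmat p q (fun k => ε k * t (σ⁻¹ k)) i j = ε ki * t (σ⁻¹ ki) := by
        rw [tmat_01 (i := i) (j := j) (t := fun k => ε k * t (σ⁻¹ k)) ki (by omega) (by omega)]
      have hmkj : (⟨(j : ℕ) / 2, by omega⟩ : Fin (p + q)) = ki :=
        Fin.ext (show (j : ℕ) / 2 = (ki : ℕ) by omega)
      rw [eT, eR, if_neg (by omega), if_pos (by omega), hmkj]
      ring
    · have eT : tmat p q t ((dup σ)⁻¹ i) ((dup σ)⁻¹ j) = -t (σ⁻¹ ki) :=
        tmat_10 (i := (dup σ)⁻¹ i) (j := (dup σ)⁻¹ j) (σ⁻¹ ki) (by omega) (by omega)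
      have eR : tmat p q (fun k => ε k * t (σ⁻¹ k)) i j = -(ε ki * t (σ⁻¹ ki)) := by
        rw [tmat_10 (i := i) (j := j) (t := fun k => ε k * t (σ⁻¹ k)) ki (by omega) (by omega)]
      have hmki : (⟨(i : ℕ) / 2, by omega⟩ : Fin (p + q)) = ki :=
        Fin.ext (show (i : ℕ) / 2 = (ki : ℕ) by omega)
      rw [eT, eR, if_pos (by omega), if_neg (by omega), hmki]
      ring
    · rw [tmat_par (show (((dup σ)⁻¹ i : Fin (2 * (p + q))) : ℕ) % 2
          = (((dup σ)⁻¹ j : Fin (2 * (p + q))) : ℕ) % 2 by omega),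
        tmat_par (show (i : ℕ) % 2 = (j : ℕ) % 2 by omega)]
      ring
  · have hane : (((dup σ)⁻¹ i : Fin (2 * (p + q))) : ℕ) / 2
        ≠ (((dup σ)⁻¹ j : Fin (2 * (p + q))) : ℕ) / 2 := by
      intro h
      apply hb
      have hinj : σ⁻¹ ki = σ⁻¹ kj := Fin.ext (by omega)
      have : ki = kj := Equiv.injective σ⁻¹ hinj
      have hv := congrArg Fin.val this
      omega
    rw [tmat_ne hane, tmat_ne hb]
    ring

lemma det_nonneg_of_commute (p q : ℕ) (h : Matrix (Fin (2 * (p + q))) (Fin (2 * (p + q))) ℝ)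
    (hc : ∀ t, h * tmat p q t = tmat p q t * h) : 0 ≤ h.det := by
  classical
  set t0 : Fin (p + q) → ℝ := fun k => ((k : ℕ) : ℝ) + 1 with ht0
  have ht0v : ∀ k : Fin (p + q), t0 k = ((k : ℕ) : ℝ) + 1 := fun k => rfl
  have ht0pos : ∀ k : Fin (p + q), 0 < t0 k := by
    intro k; rw [ht0v]; positivity
  -- h commutes with the square, a diagonal matrix with distinct blocks
  have hD : h * Matrix.diagonal (fun i : Fin (2 * (p + q)) => -(t0 ⟨(i : ℕ) / 2, by omega⟩ ^ 2))
      = Matrix.diagonal (fun i : Fin (2 * (p + q)) => -(t0 ⟨(i : ℕ) / 2, by omega⟩ ^ 2)) * h := by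
    rw [← tmat_mul_self p q t0, ← Matrix.mul_assoc, hc t0, Matrix.mul_assoc, hc t0,
      ← Matrix.mul_assoc]
  have hblock : ∀ i j : Fin (2 * (p + q)), (i : ℕ) / 2 ≠ (j : ℕ) / 2 → h i j = 0 := by
    intro i j hij
    have e1 := congrFun (congrFun hD i) j
    rw [Matrix.mul_diagonal, Matrix.diagonal_mul] at e1
    have hDiDj : -(t0 ⟨(i : ℕ) / 2, by omega⟩ ^ 2) ≠ -(t0 ⟨(j : ℕ) / 2, by omega⟩ ^ 2) := by
      rw [ht0v, ht0v]
      intro hEq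
      apply hij
      have h1 : (((i : ℕ) / 2 : ℕ) : ℝ) = (((j : ℕ) / 2 : ℕ) : ℝ) := by nlinarith [Nat.cast_nonneg (α := ℝ) ((i : ℕ) / 2), Nat.cast_nonneg (α := ℝ) ((j : ℕ) / 2)]
      exact_mod_cast h1
    have : h i j * (-(t0 ⟨(j : ℕ) / 2, by omega⟩ ^ 2) - -(t0 ⟨(i : ℕ) / 2, by omega⟩ ^ 2)) = 0 := by
      rw [mul_sub]; rw [e1]; ring
    rcases mul_eq_zero.mp this with h' | h'
    · exact h'
    · exact absurd (by linarith : -(t0 ⟨(j : ℕ) / 2, by omega⟩ ^ 2) = -(t0 ⟨(i : ℕ) / 2, by omega⟩ ^ 2)) hDiDj.symm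
  -- entry computations for h * T and T * h
  have hrowOdd : ∀ (x y : Fin (2 * (p + q))) (m : Fin (p + q)) (c : Fin (2 * (p + q))),
      (y : ℕ) = 2 * (m : ℕ) → (c : ℕ) = 2 * (m : ℕ) + 1 →
      (h * tmat p q t0) x y = -(h x c * t0 m) := by
    intro x y m c hy hcv
    rw [Matrix.mul_apply, Finset.sum_eq_single c]
    · rw [tmat_10 (i := c) (j := y) m hcv hy]; ring
    · intro b _ hb
      rcases eq_or_ne ((b : ℕ) / 2) ((y : ℕ) / 2) with h1 | h1
      · rcases eq_or_ne ((b : ℕ) % 2) ((y : ℕ) % 2) with h2 | h2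
        · rw [tmat_par h2, mul_zero]
        · exact absurd (Fin.ext (show (b : ℕ) = (c : ℕ) by omega)) hb
      · rw [tmat_ne h1, mul_zero]
    · intro hh; exact absurd (Finset.mem_univ _) hh
  have hrowEven : ∀ (x y : Fin (2 * (p + q))) (m : Fin (p + q)) (c : Fin (2 * (p + q))),
      (y : ℕ) = 2 * (m : ℕ) + 1 → (c : ℕ) = 2 * (m : ℕ) →
      (h * tmat p q t0) x y = h x c * t0 m := by
    intro x y m c hy hcv
    rw [Matrix.mul_apply, Finset.sum_eq_single c]
    · rw [tmat_01 (i := c) (j := y) m hcv hy]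
    · intro b _ hb
      rcases eq_or_ne ((b : ℕ) / 2) ((y : ℕ) / 2) with h1 | h1
      · rcases eq_or_ne ((b : ℕ) % 2) ((y : ℕ) % 2) with h2 | h2
        · rw [tmat_par h2, mul_zero]
        · exact absurd (Fin.ext (show (b : ℕ) = (c : ℕ) by omega)) hb
      · rw [tmat_ne h1, mul_zero]
    · intro hh; exact absurd (Finset.mem_univ _) hh
  have hcolEven : ∀ (x y : Fin (2 * (p + q))) (m : Fin (p + q)) (c : Fin (2 * (p + q))),
      (x : ℕ) = 2 * (m : ℕ) → (c : ℕ) = 2 * (m : ℕ) + 1 →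
      (tmat p q t0 * h) x y = t0 m * h c y := by
    intro x y m c hx hcv
    rw [Matrix.mul_apply, Finset.sum_eq_single c]
    · rw [tmat_01 (i := x) (j := c) m hx hcv]
    · intro b _ hb
      rcases eq_or_ne ((b : ℕ) / 2) ((x : ℕ) / 2) with h1 | h1
      · rcases eq_or_ne ((b : ℕ) % 2) ((x : ℕ) % 2) with h2 | h2
        · rw [tmat_par h2.symm, zero_mul]
        · exact absurd (Fin.ext (show (b : ℕ) = (c : ℕ) by omega)) hb
      · rw [tmat_ne (Ne.symm h1), zero_mul]
    · intro hh; exact absurd (Finset.mem_univ _) hh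
  have hcolOdd : ∀ (x y : Fin (2 * (p + q))) (m : Fin (p + q)) (c : Fin (2 * (p + q))),
      (x : ℕ) = 2 * (m : ℕ) + 1 → (c : ℕ) = 2 * (m : ℕ) →
      (tmat p q t0 * h) x y = -(t0 m * h c y) := by
    intro x y m c hx hcv
    rw [Matrix.mul_apply, Finset.sum_eq_single c]
    · rw [tmat_10 (i := x) (j := c) m hx hcv]; ring
    · intro b _ hb
      rcases eq_or_ne ((b : ℕ) / 2) ((x : ℕ) / 2) with h1 | h1
      · rcases eq_or_ne ((b : ℕ) % 2) ((x : ℕ) % 2) with h2 | h2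
        · rw [tmat_par h2.symm, zero_mul]
        · exact absurd (Fin.ext (show (b : ℕ) = (c : ℕ) by omega)) hb
      · rw [tmat_ne (Ne.symm h1), zero_mul]
    · intro hh; exact absurd (Finset.mem_univ _) hh
  -- in-block relations
  have hrel : ∀ (k : Fin (p + q)) (i0 i1 : Fin (2 * (p + q))),
      (i0 : ℕ) = 2 * (k : ℕ) → (i1 : ℕ) = 2 * (k : ℕ) + 1 →
      h i1 i0 = -h i0 i1 ∧ h i1 i1 = h i0 i0 := by
    intro k i0 i1 h0 h1
    have e1 : (h * tmat p q t0) i0 i0 = -(h i0 i1 * t0 k) := hrowOdd i0 i0 k i1 h0 h1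
    have e2 : (tmat p q t0 * h) i0 i0 = t0 k * h i1 i0 := hcolEven i0 i0 k i1 h0 h1
    have e3 : (h * tmat p q t0) i0 i1 = h i0 i0 * t0 k := hrowEven i0 i1 k i0 h1 h0
    have e4 : (tmat p q t0 * h) i0 i1 = t0 k * h i1 i1 := hcolEven i0 i1 k i1 h0 h1
    have hct := hc t0
    have f1 : -(h i0 i1 * t0 k) = t0 k * h i1 i0 := by rw [← e1, ← e2, hct]
    have f2 : h i0 i0 * t0 k = t0 k * h i1 i1 := by rw [← e3, ← e4, hct]
    have hpos := ht0pos k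
    constructor
    · have : t0 k * (h i1 i0 + h i0 i1) = 0 := by linarith
      rcases mul_eq_zero.mp this with h' | h'
      · linarith
      · linarith
    · have : t0 k * (h i1 i1 - h i0 i0) = 0 := by linarith
      rcases mul_eq_zero.mp this with h' | h'
      · linarith
      · linarith
  -- block-diagonal decomposition
  set B : Fin (p + q) → Matrix (Fin 2) (Fin 2) ℝ := fun k =>
    Matrix.of fun r s : Fin 2 =>
      h ⟨2 * (k : ℕ) + (r : ℕ), by omega⟩ ⟨2 * (k : ℕ) + (s : ℕ), by omega⟩ with hB
  have hsub : h.submatrix (psiE (p + q)) (psiE (p + q)) = Matrix.blockDiagonal B := by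
    ext x y
    obtain ⟨r, k⟩ := x
    obtain ⟨s, l⟩ := y
    rw [Matrix.submatrix_apply, Matrix.blockDiagonal_apply]
    rcases eq_or_ne k l with rfl | hkl
    · rw [if_pos rfl]
      rfl
    · rw [if_neg hkl]
      apply hblock
      rw [psiE_val, psiE_val]
      have := r.isLt
      have := s.isLt
      have : (k : ℕ) ≠ (l : ℕ) := fun hh => hkl (Fin.ext hh)
      omega
  have hdet : h.det = ∏ k, (B k).det := by
    rw [← Matrix.det_submatrix_equiv_self (psiE (p + q)) h, hsub, Matrix.det_blockDiagonal]
  rw [hdet]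
  apply Finset.prod_nonneg
  intro k _
  have hrk := hrel k ⟨2 * (k : ℕ), by omega⟩ ⟨2 * (k : ℕ) + 1, by omega⟩ rfl rfl
  have hb00 : B k 0 0 = h ⟨2 * (k : ℕ), by omega⟩ ⟨2 * (k : ℕ), by omega⟩ := by
    rw [hB]
    exact congrArg₂ h (Fin.ext (by simp)) (Fin.ext (by simp))
  have hb01 : B k 0 1 = h ⟨2 * (k : ℕ), by omega⟩ ⟨2 * (k : ℕ) + 1, by omega⟩ := by
    rw [hB]
    exact congrArg₂ h (Fin.ext (by simp)) (Fin.ext (by simp))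
  have hb10 : B k 1 0 = h ⟨2 * (k : ℕ) + 1, by omega⟩ ⟨2 * (k : ℕ), by omega⟩ := by
    rw [hB]
    exact congrArg₂ h (Fin.ext (by simp)) (Fin.ext (by simp))
  have hb11 : B k 1 1 = h ⟨2 * (k : ℕ) + 1, by omega⟩ ⟨2 * (k : ℕ) + 1, by omega⟩ := by
    rw [hB]
    exact congrArg₂ h (Fin.ext (by simp)) (Fin.ext (by simp))
  rw [Matrix.det_fin_two, hb00, hb01, hb10, hb11, hrk.1, hrk.2]
  nlinarith [sq_nonneg (h ⟨2 * (k : ℕ), by omega⟩ ⟨2 * (k : ℕ), by omega⟩),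
    sq_nonneg (h ⟨2 * (k : ℕ), by omega⟩ ⟨2 * (k : ℕ) + 1, by omega⟩)]

lemma gmat_det' (p q : ℕ) (σ : Equiv.Perm (Fin (p + q))) (ε : Fin (p + q) → ℝ) :
    (gmat p q σ ε).det = ∏ k, ε k := by
  rw [gmat, Matrix.det_mul, Matrix.det_diagonal, Matrix.det_permutation, Equiv.Perm.sign_inv,
    sign_dup, prod_d_eq p q ε]
  norm_num

lemma tmat_single_supp (p q : ℕ) (i : Fin (p + q)) (a b : Fin (2 * (p + q)))
    (hai : (a : ℕ) / 2 ≠ (i : ℕ)) : tmat p q (Pi.single i 1) a b = 0 := by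
  have hne : (⟨(a : ℕ) / 2, by omega⟩ : Fin (p + q)) ≠ i := fun h => hai (congrArg Fin.val h)
  rw [tmat_apply]
  split_ifs
  · exact Pi.single_eq_of_ne hne 1
  · rw [Pi.single_eq_of_ne hne 1, neg_zero]
  · rfl
  · rfl

theorem weyl_main (p q : ℕ) (hp : 1 ≤ p) (hq : 1 ≤ q) :
    {f : (Fin (p + q) → ℝ) → Fin (p + q) → ℝ |
        ∃ g ∈ Kset p q, ∀ t, g * tmat p q t * g.transpose = tmat p q (f t)} =
      {f | ∃ (σ : Equiv.Perm (Fin (p + q))) (ε : Fin (p + q) → ℝ),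
        (∀ i, ε i = 1 ∨ ε i = -1) ∧
        (∀ i : Fin (p + q), (i : ℕ) < p ↔ ((σ i : Fin (p + q)) : ℕ) < p) ∧
        (∏ i, ε i) = 1 ∧
        ∀ t k, f t k = ε k * t (σ⁻¹ k)} := by
  classical
  ext f
  simp only [Set.mem_setOf_eq]
  constructor
  · rintro ⟨g, ⟨horth, hdet, hblk0⟩, hgc⟩
    have hortho' : g.transpose * g = 1 := mul_eq_one_comm.mp horth
    have traceConj : ∀ M : Matrix (Fin (2 * (p + q))) (Fin (2 * (p + q))) ℝ,
        (g * M * g.transpose).trace = M.trace := by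
      intro M
      rw [Matrix.trace_mul_comm (g * M) g.transpose, ← Matrix.mul_assoc, hortho',
        Matrix.one_mul]
    have hmulconj : ∀ M N : Matrix (Fin (2 * (p + q))) (Fin (2 * (p + q))) ℝ,
        (g * M * g.transpose) * (g * N * g.transpose) = g * (M * N) * g.transpose := by
      intro M N
      simp only [Matrix.mul_assoc]
      rw [← Matrix.mul_assoc g.transpose g (N * g.transpose), hortho', Matrix.one_mul]
    have hnorm2 : ∀ t, ∑ k, (f t k) ^ 2 = ∑ k, t k ^ 2 := by
      intro t
      have e1 : tmat p q (f t) * tmat p q (f t)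
          = g * (tmat p q t * tmat p q t) * g.transpose := by
        rw [← hgc t]; exact hmulconj _ _
      have e2 := congrArg Matrix.trace e1
      rw [trace_tmat_sq, traceConj, trace_tmat_sq] at e2
      linarith
    have hnorm4 : ∀ t, ∑ k, (f t k) ^ 4 = ∑ k, t k ^ 4 := by
      intro t
      have e1 : tmat p q (f t) * tmat p q (f t)
          = g * (tmat p q t * tmat p q t) * g.transpose := by
        rw [← hgc t]; exact hmulconj _ _
      have e1' : (tmat p q (f t) * tmat p q (f t)) * (tmat p q (f t) * tmat p q (f t))
          = g * ((tmat p q t * tmat p q t) * (tmat p q t * tmat p q t)) * g.transpose := by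
        rw [e1]; exact hmulconj _ _
      have e2 := congrArg Matrix.trace e1'
      rw [trace_tmat_four, traceConj, trace_tmat_four] at e2
      linarith
    have hfA : ∀ t, f t = (Matrix.of fun k j => f (Pi.single j 1) k).mulVec t :=
      fun t => conj_linear g f hgc t
    obtain ⟨σ, ε, hε, hAform⟩ := signed_perm_of_norms (Matrix.of fun k j => f (Pi.single j 1) k)
      (fun x => by rw [show (Matrix.of fun k j => f (Pi.single j 1) k).mulVec x = f x from (hfA x).symm]; exact hnorm2 x)
      (fun x => by rw [show (Matrix.of fun k j => f (Pi.single j 1) k).mulVec x = f x from (hfA x).symm]; exact hnorm4 x)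
    have hform : ∀ t k, f t k = ε k * t (σ⁻¹ k) := by
      intro t k
      rw [hfA t, Matrix.mulVec, dotProduct]
      rw [Finset.sum_eq_single (σ⁻¹ k)]
      · rw [hAform, if_pos rfl]
      · intro b _ hb; rw [hAform, if_neg hb, zero_mul]
      · intro hh; exact absurd (Finset.mem_univ _) hh
    have hiff : ∀ i : Fin (p + q), (i : ℕ) < p ↔ ((σ i : Fin (p + q)) : ℕ) < p := by
      intro i
      by_contra hiffn
      obtain ⟨x, hx⟩ : ∃ x : Fin (2 * (p + q)), (x : ℕ) = 2 * ((σ i : Fin (p + q)) : ℕ) :=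
        ⟨⟨_, by omega⟩, rfl⟩
      obtain ⟨y, hy⟩ : ∃ y : Fin (2 * (p + q)), (y : ℕ) = 2 * ((σ i : Fin (p + q)) : ℕ) + 1 :=
        ⟨⟨_, by omega⟩, rfl⟩
      have hzero : (g * tmat p q (Pi.single i 1) * g.transpose) x y = 0 := by
        rw [Matrix.mul_apply]
        apply Finset.sum_eq_zero
        intro b _
        rw [Matrix.mul_apply]
        rw [Finset.sum_eq_zero, zero_mul]
        intro a _
        by_cases hai : (a : ℕ) / 2 = (i : ℕ)
        · have hga : g x a = 0 := hblk0 x a (by omega)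
          rw [hga, zero_mul]
        · rw [tmat_single_supp p q i a b hai, mul_zero]
      have hval : (g * tmat p q (Pi.single i 1) * g.transpose) x y = ε (σ i) := by
        rw [hgc, tmat_01 (i := x) (j := y) (σ i) hx hy, hform, (show σ⁻¹ (σ i) = i from Equiv.symm_apply_apply σ i),
          Pi.single_eq_same, mul_one]
      rw [hzero] at hval
      rcases hε (σ i) with h' | h' <;> rw [← hval] at h' <;> norm_num at h'
    have hprod : (∏ k, ε k) = 1 := by
      have hg0orth : gmat p q σ ε * (gmat p q σ ε).transpose = 1 := gmat_orth p q σ ε hε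
      have hg0orth' : (gmat p q σ ε).transpose * gmat p q σ ε = 1 :=
        mul_eq_one_comm.mp hg0orth
      have hsame : ∀ t, g * tmat p q t * g.transpose
          = gmat p q σ ε * tmat p q t * (gmat p q σ ε).transpose := by
        intro t
        rw [hgc t, gmat_conj p q σ ε t]
        exact congrArg (tmat p q) (funext fun k => hform t k)
      have hcomm : ∀ t, ((gmat p q σ ε).transpose * g) * tmat p q t
          = tmat p q t * ((gmat p q σ ε).transpose * g) := by
        intro t
        have e1 := hsame t
        have e2 := congrArg (fun M => (gmat p q σ ε).transpose * M * g) e1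
        simp only [Matrix.mul_assoc] at e2 ⊢
        rw [hortho', Matrix.mul_one] at e2
        rw [← Matrix.mul_assoc (gmat p q σ ε).transpose (gmat p q σ ε)
          (tmat p q t * ((gmat p q σ ε).transpose * g)), hg0orth', Matrix.one_mul] at e2
        exact e2
      have hdet0 : ((gmat p q σ ε).transpose * g).det = ∏ k, ε k := by
        rw [Matrix.det_mul, Matrix.det_transpose, gmat_det' p q σ ε, hdet, mul_one]
      have hnn := det_nonneg_of_commute p q _ hcomm
      rw [hdet0] at hnn
      have hsq : (∏ k, ε k) ^ 2 = 1 := by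
        rw [← Finset.prod_pow]
        rw [Finset.prod_congr rfl (fun k _ => show ε k ^ 2 = 1 by rcases hε k with h | h <;> rw [h] <;> norm_num)]
        exact Finset.prod_const_one
      nlinarith
    exact ⟨σ, ε, hε, hiff, hprod, hform⟩
  · rintro ⟨σ, ε, hε, hblk, hprod, hform⟩
    refine ⟨gmat p q σ ε, ⟨gmat_orth p q σ ε hε,
      by rw [gmat_det' p q σ ε, hprod],
      fun i j hij => gmat_block p q σ ε hblk i j hij⟩, ?_⟩
    intro t
    rw [gmat_conj p q σ ε t]
    exact congrArg (tmat p q) (funext fun k => (hform t k).symm)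

/-- For `K = S(O(2p) × O(2q)) ⊂ SO(2p+2q)` with `k = 2p`, `m = 2q` both even:
the element `s` normalizes the Cartan subalgebra `𝔱` and acts on its coordinates by
changing the signs of `t_p` and `t_{p+q}`; and the group-theoretic Weyl group
`W_K = N_K(𝔱)/Z_K(𝔱)`, realized as the set of transformations of `𝔱 ≅ ℝ^{p+q}` induced
by conjugation by elements of `K`, is exactly the group `S(B_p × B_q)` of signed
permutations preserving the first `p` and last `q` coordinates with an even total
number of sign changes. -/
theorem weyl_group_S_Bp_Bq (p q : ℕ) (hp : 1 ≤ p) (hq : 1 ≤ q) :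
    (smat p q ∈ Kset p q) ∧
    (∀ t : Fin (p + q) → ℝ,
      smat p q * tmat p q t * smat p q =
        tmat p q fun k =>
          if (k : ℕ) = p - 1 ∨ (k : ℕ) = p + q - 1 then -t k else t k) ∧
    {f : (Fin (p + q) → ℝ) → Fin (p + q) → ℝ |
        ∃ g ∈ Kset p q, ∀ t, g * tmat p q t * g.transpose = tmat p q (f t)} =
      {f | ∃ (σ : Equiv.Perm (Fin (p + q))) (ε : Fin (p + q) → ℝ),
        (∀ i, ε i = 1 ∨ ε i = -1) ∧
        (∀ i : Fin (p + q), (i : ℕ) < p ↔ ((σ i : Fin (p + q)) : ℕ) < p) ∧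
        (∏ i, ε i) = 1 ∧
        ∀ t k, f t k = ε k * t (σ⁻¹ k)} :=
  ⟨smat_mem p q hp hq, smat_conj p q hp hq, weyl_main p q hp hq⟩
end entries
end
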